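/- arXiv:2604.00475 — 10 statements merged into one kernel-verified Lean document; each statement's English description precedes it below -/
import Mathlib

section
/- Let n ≥ 2 be an integer and let F_n : ℝ → ℝ be the Fejér kernel. Then for every x ∈ ℝ, the sum over one period of grid translates is normalized: Σ_{k=0}^{n−1} F_n(x + 2πk/n) / F_n(0) = 1. -/
open scoped BigOperators

open Classical in
/-- The Fejér kernel: `F_n(x) = n` if `x ∈ 2πℤ`, else `(1/n)·sin²(nx/2)/sin²(x/2)`. -/
noncomputable def fejer (n : ℕ) (x : ℝ) : ℝ :=
  if ∃ k : ℤ, x = 2 * Real.pi * (k : ℝ) then (n : ℝ)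
  else (1 / (n : ℝ)) * (Real.sin ((n : ℝ) * x / 2)) ^ 2 / (Real.sin (x / 2)) ^ 2

/-- The normalized Fejér kernel `F̃_N = F_N / N`. -/
noncomputable def fejerN (n : ℕ) (x : ℝ) : ℝ := fejer n x / (n : ℝ)

/-- Distance on the torus `ℝ/ℤ`: `|x − y|_T = min_{k ∈ ℤ} |x − y − k|`. -/
noncomputable def distT (x y : ℝ) : ℝ := sInf {d : ℝ | ∃ k : ℤ, d = |x - y - (k : ℝ)|}

/-- State-averaged QPE output probability `p_j`. -/
noncomputable def pdist (M N : ℕ) (θ : ℕ → ℝ) (j : ℤ) : ℝ :=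
  (1 / (M : ℝ)) * ∑ k ∈ Finset.range M, fejerN N (2 * Real.pi * (θ k - (j : ℝ) / (N : ℝ)))

noncomputable def tauC : ℝ := 4 / Real.pi ^ 2

noncomputable def sigmaC : ℝ := (2 / Real.pi ^ 2) * ∑' l : ℕ, (1 : ℝ) / (3 * (l : ℝ) + 1) ^ 2

noncomputable def dC (N : ℕ) : ℝ := (1 - 4 / Real.pi ^ 2) / (N : ℝ) ^ 2

noncomputable def gammaC : ℝ :=
  1 + (1 / Real.pi ^ 2) * (Real.pi ^ 2 / 6 - ∑' l : ℕ, (1 : ℝ) / (3 * (l : ℝ) + 1) ^ 2)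


private lemma normSq_exp_sub_one (t : ℝ) :
    Complex.normSq (Complex.exp (t * Complex.I) - 1) = 4 * Real.sin (t/2)^2 := by
  rw [Complex.normSq_apply]
  simp [Complex.exp_re, Complex.exp_im, Complex.sub_re, Complex.sub_im]
  have h := Real.sin_sq_eq_half_sub (t/2)
  have h2 : 2 * (t/2) = t := by ring
  rw [h2] at h
  nlinarith [h, Real.cos_sq_add_sin_sq t]

private noncomputable def Dker (n : ℕ) (y : ℝ) : ℂ :=
  ∑ j ∈ Finset.range n, Complex.exp ((j : ℂ) * (y : ℂ) * Complex.I)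

open Classical in
private lemma fejer_eq_normSq (n : ℕ) (hn : 0 < n) (x : ℝ) :
    fejer n x = Complex.normSq (Dker n x) / n := by
  have hn0 : (n : ℂ) ≠ 0 := Nat.cast_ne_zero.mpr hn.ne'
  unfold fejer Dker
  split_ifs with h
  · obtain ⟨m, rfl⟩ := h
    have hone : ∀ j ∈ Finset.range n,
        Complex.exp ((j : ℂ) * ((2 * Real.pi * (m : ℝ) : ℝ) : ℂ) * Complex.I) = 1 := by
      intro j _
      have e : ((j : ℂ) * ((2 * Real.pi * (m : ℝ) : ℝ) : ℂ) * Complex.I)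
          = ((j * m : ℤ) : ℂ) * (2 * Real.pi * Complex.I) := by push_cast; ring
      rw [e, Complex.exp_int_mul_two_pi_mul_I]
    rw [Finset.sum_congr rfl hone]
    simp [Complex.normSq_natCast]
  · have hx : Complex.exp ((x : ℂ) * Complex.I) ≠ 1 := by
      intro hc
      rw [Complex.exp_eq_one_iff] at hc
      obtain ⟨k, hk⟩ := hc
      apply h
      refine ⟨k, ?_⟩
      have h2 : ((x : ℂ)) * Complex.I = ((2 * Real.pi * (k : ℝ) : ℝ) : ℂ) * Complex.I := by
        rw [hk]; push_cast; ring
      have h3 := mul_right_cancel₀ Complex.I_ne_zero h2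
      exact_mod_cast h3
    have hterm : ∀ j : ℕ, Complex.exp ((j : ℂ) * (x : ℂ) * Complex.I)
        = (Complex.exp ((x : ℂ) * Complex.I)) ^ j := by
      intro j
      rw [← Complex.exp_nat_mul]; congr 1; ring
    rw [Finset.sum_congr rfl (fun j _ => hterm j), geom_sum_eq hx, Complex.normSq_div]
    have hpow : (Complex.exp ((x : ℂ) * Complex.I)) ^ n
        = Complex.exp (((n * x : ℝ) : ℂ) * Complex.I) := by
      rw [← Complex.exp_nat_mul]; congr 1; push_cast; ring
    rw [hpow, normSq_exp_sub_one, normSq_exp_sub_one]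
    rw [mul_div_mul_left _ _ (by norm_num : (4:ℝ) ≠ 0)]
    ring

private lemma geom_zero (n : ℕ) (hn : 0 < n) (m : ℤ) (hm : ¬ ((n : ℤ) ∣ m)) :
    ∑ k ∈ Finset.range n, Complex.exp ((m : ℂ) * (2 * Real.pi) * (k : ℂ) / n * Complex.I) = 0 := by
  have hn0 : (n : ℂ) ≠ 0 := Nat.cast_ne_zero.mpr hn.ne'
  have hterm : ∀ k : ℕ, Complex.exp ((m : ℂ) * (2 * Real.pi) * (k : ℂ) / n * Complex.I)
      = (Complex.exp ((m : ℂ) * (2 * Real.pi) / n * Complex.I)) ^ k := by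
    intro k
    rw [← Complex.exp_nat_mul]; congr 1; ring
  rw [Finset.sum_congr rfl (fun k _ => hterm k)]
  have hne : Complex.exp ((m : ℂ) * (2 * Real.pi) / n * Complex.I) ≠ 1 := by
    intro hc
    rw [Complex.exp_eq_one_iff] at hc
    obtain ⟨k', hk⟩ := hc
    apply hm
    refine ⟨k', ?_⟩
    have h2 : (m : ℂ) = (n : ℂ) * (k' : ℂ) := by
      have hI := Complex.I_ne_zero
      have hpi : (Real.pi : ℂ) ≠ 0 := Complex.ofReal_ne_zero.mpr Real.pi_ne_zero
      field_simp at hk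
      have h3 : (m : ℂ) * (2 * Real.pi * Complex.I) = ((n : ℂ) * (k' : ℂ)) * (2 * Real.pi * Complex.I) := by
        linear_combination (2 * (Real.pi : ℂ) * Complex.I) * hk
      have h4 : (2 * (Real.pi : ℂ) * Complex.I) ≠ 0 := by
        simp [hpi, Complex.I_ne_zero]
      exact mul_right_cancel₀ h4 h3
    exact_mod_cast h2
  rw [geom_sum_eq hne]
  have hpown : (Complex.exp ((m : ℂ) * (2 * Real.pi) / n * Complex.I)) ^ n = 1 := by
    rw [← Complex.exp_nat_mul]
    have e : (n : ℂ) * ((m : ℂ) * (2 * Real.pi) / n * Complex.I) = (m : ℂ) * (2 * Real.pi * Complex.I) := by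
      field_simp
    rw [e]
    exact_mod_cast Complex.exp_int_mul_two_pi_mul_I m
  rw [hpown, sub_self, zero_div]

private lemma orth (n : ℕ) (hn : 0 < n) (j l : ℕ) (hj : j < n) (hl : l < n) :
    ∑ k ∈ Finset.range n, Complex.exp (((j : ℂ) - (l : ℂ)) * ((2 * Real.pi * (k : ℝ) / (n : ℝ) : ℝ) : ℂ) * Complex.I)
      = if j = l then (n : ℂ) else 0 := by
  split_ifs with h
  · subst h
    simp only [sub_self, zero_mul, Complex.exp_zero, Finset.sum_const, Finset.card_range,
      nsmul_eq_mul, mul_one]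
  · have hm : ¬ ((n : ℤ) ∣ ((j : ℤ) - l)) := by
      intro hd
      have h1 : ((j : ℤ) - l) ≠ 0 := by
        intro h0
        apply h
        omega
      have h2 : |((j : ℤ) - l)| < n := by
        rw [abs_lt]; omega
      have h3 := Int.le_of_dvd (abs_pos.mpr h1) ((dvd_abs _ _).mpr hd)
      omega
    have := geom_zero n hn ((j : ℤ) - l) hm
    rw [← this]
    refine Finset.sum_congr rfl fun k _ => ?_
    congr 1
    push_cast
    ring

private lemma sum_normSq_grid (n : ℕ) (hn : 0 < n) (x : ℝ) :
    ∑ k ∈ Finset.range n, Complex.normSq (Dker n (x + 2 * Real.pi * (k : ℝ) / (n : ℝ))) = n ^ 2 := by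
  have key : (↑(∑ k ∈ Finset.range n, Complex.normSq (Dker n (x + 2 * Real.pi * (k : ℝ) / (n : ℝ)))) : ℂ) = (n : ℂ) ^ 2 := by
    push_cast
    have expand : ∀ k : ℕ,
        ((Complex.normSq (Dker n (x + 2 * Real.pi * (k : ℝ) / (n : ℝ))) : ℝ) : ℂ)
        = ∑ j ∈ Finset.range n, ∑ l ∈ Finset.range n,
            Complex.exp (((j : ℂ) - (l : ℂ)) * (x : ℂ) * Complex.I) *
            Complex.exp (((j : ℂ) - (l : ℂ)) * ((2 * Real.pi * (k : ℝ) / (n : ℝ) : ℝ) : ℂ) * Complex.I) := by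
      intro k
      rw [← Complex.mul_conj]
      unfold Dker
      rw [map_sum, Finset.sum_mul_sum]
      refine Finset.sum_congr rfl fun j _ => Finset.sum_congr rfl fun l _ => ?_
      rw [← Complex.exp_conj, ← Complex.exp_add, ← Complex.exp_add]
      congr 1
      simp only [map_mul, Complex.conj_ofReal, Complex.conj_I, Complex.conj_natCast]
      push_cast
      ring
    calc ∑ k ∈ Finset.range n, ((Complex.normSq (Dker n (x + 2 * Real.pi * (k : ℝ) / (n : ℝ))) : ℝ) : ℂ)
        = ∑ k ∈ Finset.range n, ∑ j ∈ Finset.range n, ∑ l ∈ Finset.range n,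
            Complex.exp (((j : ℂ) - (l : ℂ)) * (x : ℂ) * Complex.I) *
            Complex.exp (((j : ℂ) - (l : ℂ)) * ((2 * Real.pi * (k : ℝ) / (n : ℝ) : ℝ) : ℂ) * Complex.I) := by
          exact Finset.sum_congr rfl fun k _ => expand k
      _ = ∑ j ∈ Finset.range n, ∑ l ∈ Finset.range n,
            Complex.exp (((j : ℂ) - (l : ℂ)) * (x : ℂ) * Complex.I) *
            ∑ k ∈ Finset.range n,
              Complex.exp (((j : ℂ) - (l : ℂ)) * ((2 * Real.pi * (k : ℝ) / (n : ℝ) : ℝ) : ℂ) * Complex.I) := by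
          rw [Finset.sum_comm]
          refine Finset.sum_congr rfl fun j _ => ?_
          rw [Finset.sum_comm]
          refine Finset.sum_congr rfl fun l _ => ?_
          rw [Finset.mul_sum]
      _ = ∑ j ∈ Finset.range n, ∑ l ∈ Finset.range n,
            Complex.exp (((j : ℂ) - (l : ℂ)) * (x : ℂ) * Complex.I) *
            (if j = l then (n : ℂ) else 0) := by
          refine Finset.sum_congr rfl fun j hj => Finset.sum_congr rfl fun l hl => ?_
          rw [orth n hn j l (Finset.mem_range.mp hj) (Finset.mem_range.mp hl)]
      _ = ∑ j ∈ Finset.range n, (n : ℂ) := by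
          refine Finset.sum_congr rfl fun j hj => ?_
          rw [Finset.sum_eq_single j]
          · simp
          · intro b _ hb
            simp [Ne.symm hb]
          · intro hj'
            exact absurd hj hj'
      _ = (n : ℂ) ^ 2 := by
          rw [Finset.sum_const, Finset.card_range]
          ring
  exact_mod_cast key


/-- normalization of grid translates of the Fejér kernel. -/
theorem fejer_grid_sum_eq_one (n : ℕ) (hn : 2 ≤ n) (x : ℝ) :
    ∑ k ∈ Finset.range n, fejer n (x + 2 * Real.pi * (k : ℝ) / (n : ℝ)) / fejer n 0 = 1 := by
  have hn0 : 0 < n := by omega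
  have hnR : (n : ℝ) ≠ 0 := Nat.cast_ne_zero.mpr hn0.ne'
  have h0 : fejer n 0 = n := by
    unfold fejer
    rw [if_pos ⟨0, by simp⟩]
  rw [h0]
  have := sum_normSq_grid n hn0 x
  rw [← Finset.sum_div]
  rw [Finset.sum_congr rfl (fun k _ => fejer_eq_normSq n hn0 _)]
  rw [← Finset.sum_div, this]
  field_simp
end

section
/- Let n ≥ 4 be an integer and let k be an integer with 1 ≤ k ≤ ⌊n/2⌋ − 1. Then for every x ∈ [2kπ/n, 2(k+1)π/n], F_n(x)/F_n(0) ≤ 1/(k²π²) + (1/n²)·(1 − 4/π²). -/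
open scoped BigOperators

open Real

lemma sin_ge_sub_cube' {u : ℝ} (hu : 0 ≤ u) : u - u ^ 3 / 6 ≤ Real.sin u := by
  have key : MonotoneOn (fun u : ℝ => Real.sin u - u + u ^ 3 / 6) (Set.Ici 0) := by
    apply monotoneOn_of_deriv_nonneg (convex_Ici 0)
    · fun_prop
    · fun_prop
    · intro t ht
      have h : HasDerivAt (fun u : ℝ => Real.sin u - u + u ^ 3 / 6)
          (Real.cos t - 1 + 3 * t ^ 2 / 6) t := by
        have := ((Real.hasDerivAt_sin t).sub (hasDerivAt_id t)).add
          (((hasDerivAt_pow 3 t)).div_const 6)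
        simp at this
        exact this
      rw [h.deriv]
      nlinarith [Real.one_sub_sq_div_two_le_cos (x := t)]
  have := key (Set.mem_Ici.mpr le_rfl) (Set.mem_Ici.mpr hu) hu
  simp at this
  nlinarith [this]

lemma cos_le_quartic {u : ℝ} (hu : 0 ≤ u) : Real.cos u ≤ 1 - u ^ 2 / 2 + u ^ 4 / 24 := by
  have key : MonotoneOn (fun u : ℝ => 1 - u ^ 2 / 2 + u ^ 4 / 24 - Real.cos u) (Set.Ici 0) := by
    apply monotoneOn_of_deriv_nonneg (convex_Ici 0)
    · fun_prop
    · fun_prop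
    · intro t ht
      have h : HasDerivAt (fun u : ℝ => 1 - u ^ 2 / 2 + u ^ 4 / 24 - Real.cos u)
          (0 - 2 * t / 2 + 4 * t ^ 3 / 24 - (-Real.sin t)) t := by
        have := (((hasDerivAt_const t (1:ℝ)).sub ((hasDerivAt_pow 2 t).div_const 2)).add
          ((hasDerivAt_pow 4 t).div_const 24)).sub (Real.hasDerivAt_cos t)
        refine this.congr_deriv ?_
        rw [show (2:ℕ) - 1 = 1 from rfl, show (4:ℕ) - 1 = 3 from rfl]
        push_cast
        ring
      rw [h.deriv]
      have ht0 : (0:ℝ) ≤ t := le_of_lt (by simpa using ht)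
      nlinarith [sin_ge_sub_cube' ht0]
  have := key (Set.mem_Ici.mpr le_rfl) (Set.mem_Ici.mpr hu) hu
  simp at this
  nlinarith [this]

lemma sin_cube_ge {t : ℝ} (ht : 0 < t) (ht' : t ≤ π / 2) :
    t ^ 3 * Real.cos t ≤ Real.sin t ^ 3 := by
  have h1 : t - t ^ 3 / 6 ≤ Real.sin t := sin_ge_sub_cube' ht.le
  have h2 : Real.cos t ≤ 1 - t ^ 2 / 2 + t ^ 4 / 24 := cos_le_quartic ht.le
  have ht2 : t ^ 2 ≤ 5 / 2 := by nlinarith [Real.pi_lt_d2, Real.pi_pos]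
  have hs0 : 0 ≤ t - t ^ 3 / 6 := by nlinarith
  have hgap : (0:ℝ) ≤ t ^ 3 * (t ^ 4 / 24 - t ^ 6 / 216) := by
    apply mul_nonneg (pow_pos ht 3).le
    nlinarith [mul_le_mul_of_nonneg_left ht2 (pow_nonneg ht.le 4)]
  nlinarith [pow_le_pow_left₀ hs0 h1 3,
    mul_le_mul_of_nonneg_left h2 (pow_pos ht 3).le, hgap]

lemma inv_sin_sq_le {t : ℝ} (ht : 0 < t) (ht' : t ≤ π / 2) :
    1 / Real.sin t ^ 2 ≤ 1 / t ^ 2 + (1 - 4 / π ^ 2) := by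
  have hpi := Real.pi_pos
  have key : MonotoneOn (fun t : ℝ => 1 / Real.sin t ^ 2 - 1 / t ^ 2) (Set.Ioc 0 (π / 2)) := by
    apply monotoneOn_of_deriv_nonneg (convex_Ioc 0 (π/2))
    · apply ContinuousOn.sub
      · apply ContinuousOn.div continuousOn_const (by fun_prop)
        intro s hs
        have : 0 < Real.sin s := Real.sin_pos_of_pos_of_lt_pi hs.1 (by nlinarith [hs.2])
        positivity
      · apply ContinuousOn.div continuousOn_const (by fun_prop)
        intro s hs
        have := hs.1
        positivity
    · intro s hs
      rw [interior_Ioc] at hs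
      have hsin : 0 < Real.sin s := Real.sin_pos_of_pos_of_lt_pi hs.1 (by nlinarith [hs.2])
      have hs1 := hs.1
      apply DifferentiableAt.differentiableWithinAt
      exact ((differentiableAt_const 1).div ((Real.differentiable_sin s).pow 2)
        (pow_pos hsin 2).ne').sub ((differentiableAt_const 1).div (differentiableAt_pow 2)
        (by positivity))
    · intro s hs
      rw [interior_Ioc] at hs
      have hs1 : 0 < s := hs.1
      have hs2 : s < π / 2 := hs.2
      have hsin : 0 < Real.sin s := Real.sin_pos_of_pos_of_lt_pi hs1 (by nlinarith)
      have hcos : 0 ≤ Real.cos s := Real.cos_nonneg_of_mem_Icc ⟨by linarith, hs2.le⟩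
      have d1 : HasDerivAt (fun t : ℝ => 1 / Real.sin t ^ 2 - 1 / t ^ 2)
          (-(2 * Real.sin s ^ 1 * Real.cos s) / (Real.sin s ^ 2) ^ 2
            - -(2 * s ^ 1 * 1) / (s ^ 2) ^ 2) s := by
        have hA : HasDerivAt (fun t : ℝ => Real.sin t ^ 2) (2 * Real.sin s ^ 1 * Real.cos s) s :=
          (Real.hasDerivAt_sin s).pow 2
        have hB : HasDerivAt (fun t : ℝ => t ^ 2) (2 * s ^ 1 * 1) s :=
          (hasDerivAt_id s).pow 2
        have := (hA.inv (by positivity)).sub (hB.inv (by positivity))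
        simp [one_div]
        simp [one_div] at this
        exact this
      rw [d1.deriv]
      have hkey := sin_cube_ge hs1 (le_of_lt hs2)
      rw [sub_nonneg, div_le_div_iff₀ (by positivity) (by positivity)]
      ring_nf
      nlinarith [mul_le_mul_of_nonneg_left hkey (mul_pos hs1 hsin).le,
        pow_pos hsin 2, pow_pos hs1 2]
  have h2 : (π / 2) ∈ Set.Ioc 0 (π / 2) := ⟨by positivity, le_rfl⟩
  have := key ⟨ht, ht'⟩ h2 ht'
  simp only [Real.sin_pi_div_two] at this
  have h4 : 1 / ((π / 2) ^ 2 : ℝ) = 4 / π ^ 2 := by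
    rw [div_pow, one_div_div]
    norm_num
  rw [h4] at this
  norm_num at this
  rw [one_div, one_div]
  linarith


set_option maxHeartbeats 1000000 in
open Classical in
theorem fejer_sidelobe_bound_aux (n : ℕ) (hn : 4 ≤ n) (k : ℕ) (hk1 : 1 ≤ k)
    (hk2 : k ≤ n / 2 - 1) (x : ℝ)
    (hx : x ∈ Set.Icc (2 * (k : ℝ) * Real.pi / (n : ℝ)) (2 * ((k : ℝ) + 1) * Real.pi / (n : ℝ))) :
    (if ∃ m : ℤ, x = 2 * Real.pi * (m : ℝ) then (n : ℝ)
      else (1 / (n : ℝ)) * (Real.sin ((n : ℝ) * x / 2)) ^ 2 / (Real.sin (x / 2)) ^ 2) / (n : ℝ) ≤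
      1 / ((k : ℝ) ^ 2 * Real.pi ^ 2) + (1 / (n : ℝ) ^ 2) * (1 - 4 / Real.pi ^ 2) := by
  have hpi := Real.pi_pos
  obtain ⟨hxl, hxr⟩ := hx
  have hn0 : (0:ℝ) < n := by positivity
  have hk0 : (0:ℝ) < k := by exact_mod_cast hk1
  have hkn : 2 * (k + 1) ≤ n := by omega
  have hknR : 2 * ((k:ℝ) + 1) ≤ (n:ℝ) := by exact_mod_cast hkn
  have hx_pos : 0 < x := lt_of_lt_of_le (by positivity) hxl
  have hx_le_pi : x ≤ π := by
    refine le_trans hxr ?_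
    rw [div_le_iff₀ hn0]
    nlinarith
  have hxne : ¬ ∃ m : ℤ, x = 2 * π * (m:ℝ) := by
    rintro ⟨m, hm⟩
    have hm0 : (0:ℝ) < (m:ℝ) := by nlinarith
    have hm1 : (1:ℝ) ≤ (m:ℝ) := by exact_mod_cast hm0
    nlinarith
  rw [if_neg hxne]
  set t := x / 2 with htdef
  have ht1 : 0 < t := by positivity
  have ht2 : t ≤ π / 2 := by simp only [htdef]; linarith
  have hsin : 0 < Real.sin t := Real.sin_pos_of_pos_of_lt_pi ht1 (by nlinarith)
  have hbound := inv_sin_sq_le ht1 ht2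
  have htlow : (k:ℝ) * π / n ≤ t := by
    rw [htdef, div_le_div_iff₀ hn0 (by norm_num : (0:ℝ) < 2)]
    have h := (div_le_iff₀ hn0).mp hxl
    nlinarith
  have htlow0 : 0 < (k:ℝ) * π / n := by positivity
  have h1t : 1 / t ^ 2 ≤ (n:ℝ) ^ 2 / ((k:ℝ) ^ 2 * π ^ 2) := by
    rw [div_le_div_iff₀ (by positivity) (by positivity)]
    have h := (div_le_iff₀ hn0).mp htlow
    nlinarith [mul_le_mul h h (by positivity : (0:ℝ) ≤ (k:ℝ) * π) (by positivity : (0:ℝ) ≤ t * (n:ℝ))]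
  have key : 1 / Real.sin t ^ 2 ≤ (n:ℝ) ^ 2 / ((k:ℝ) ^ 2 * π ^ 2) + (1 - 4 / π ^ 2) := by
    linarith
  have hsne : Real.sin t ≠ 0 := ne_of_gt hsin
  have hnne : (n:ℝ) ≠ 0 := ne_of_gt hn0
  have hS1 : Real.sin ((n:ℝ) * x / 2) ^ 2 ≤ 1 := Real.sin_sq_le_one _
  have hS0 : 0 ≤ Real.sin ((n:ℝ) * x / 2) ^ 2 := sq_nonneg _
  have e1 : (1 / (n:ℝ) * Real.sin ((n:ℝ) * x / 2) ^ 2 / Real.sin t ^ 2) / n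
      = Real.sin ((n:ℝ) * x / 2) ^ 2 * (1 / ((n:ℝ) ^ 2) * (1 / Real.sin t ^ 2)) := by
    field_simp
    try exact Or.inl trivial
  rw [e1]
  have step1 : Real.sin ((n:ℝ) * x / 2) ^ 2 * (1 / ((n:ℝ) ^ 2) * (1 / Real.sin t ^ 2))
      ≤ 1 / ((n:ℝ) ^ 2) * (1 / Real.sin t ^ 2) :=
    mul_le_of_le_one_left (by positivity) hS1
  refine le_trans step1 ?_
  have step2 : 1 / ((n:ℝ) ^ 2) * (1 / Real.sin t ^ 2)
      ≤ 1 / ((n:ℝ) ^ 2) * ((n:ℝ) ^ 2 / ((k:ℝ) ^ 2 * π ^ 2) + (1 - 4 / π ^ 2)) :=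
    mul_le_mul_of_nonneg_left key (by positivity)
  refine le_trans step2 (le_of_eq ?_)
  field_simp

/-- sidelobe bound for the Fejér kernel on the interval
`[2kπ/n, 2(k+1)π/n]` for `1 ≤ k ≤ ⌊n/2⌋ − 1`. -/
theorem fejer_sidelobe_bound (n : ℕ) (hn : 4 ≤ n) (k : ℕ) (hk1 : 1 ≤ k)
    (hk2 : k ≤ n / 2 - 1) (x : ℝ)
    (hx : x ∈ Set.Icc (2 * (k : ℝ) * Real.pi / (n : ℝ)) (2 * ((k : ℝ) + 1) * Real.pi / (n : ℝ))) :
    fejer n x / fejer n 0 ≤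
      1 / ((k : ℝ) ^ 2 * Real.pi ^ 2) + (1 / (n : ℝ) ^ 2) * (1 - 4 / Real.pi ^ 2) := by
  have h0 : fejer n 0 = (n : ℝ) := by
    rw [fejer, if_pos ⟨0, by simp⟩]
  rw [h0, fejer]
  exact fejer_sidelobe_bound_aux n hn k hk1 hk2 x hx
end

section
/- Let n ≥ 4 be an integer. Then for every x ∈ [0, π/n], F_n(x)/F_n(0) ≥ 4/π². -/
open scoped BigOperators

/-- main-lobe lower bound for the Fejér kernel on `[0, π/n]`. -/
theorem fejer_mainlobe_bound (n : ℕ) (hn : 4 ≤ n) (x : ℝ)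
    (hx : x ∈ Set.Icc (0 : ℝ) (Real.pi / (n : ℝ))) :
    4 / Real.pi ^ 2 ≤ fejer n x / fejer n 0 := by
  have hπ := Real.pi_pos
  have hπ3 := Real.pi_gt_three
  have hn' : (4 : ℝ) ≤ (n : ℝ) := by exact_mod_cast hn
  have hn0 : (0 : ℝ) < (n : ℝ) := by linarith
  obtain ⟨hx0, hx1⟩ := hx
  have hf0 : fejer n 0 = (n : ℝ) := by
    have h : ∃ k : ℤ, (0:ℝ) = 2 * Real.pi * (k : ℝ) := ⟨0, by simp⟩
    rw [fejer, if_pos h]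
  rcases eq_or_lt_of_le hx0 with h0 | h0
  · rw [← h0, hf0, div_self (ne_of_gt hn0), div_le_one (by positivity)]
    nlinarith
  · have hxπ : x < Real.pi := lt_of_le_of_lt hx1 (by
      rw [div_lt_iff₀ hn0]; nlinarith)
    have hnot : ¬ ∃ k : ℤ, x = 2 * Real.pi * (k : ℝ) := by
      rintro ⟨k, rfl⟩
      have hk0 : (0 : ℤ) < k := by
        by_contra h
        push_neg at h
        have : (k : ℝ) ≤ 0 := by exact_mod_cast h
        nlinarith
      have hk1 : (1 : ℝ) ≤ (k : ℝ) := by exact_mod_cast hk0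
      nlinarith
    rw [hf0, fejer, if_neg hnot]
    have hb0 : 0 < Real.sin (x / 2) :=
      Real.sin_pos_of_pos_of_lt_pi (by linarith) (by linarith)
    have hb : Real.sin (x / 2) ≤ x / 2 := Real.sin_le (by linarith)
    have hnx : (n : ℝ) * x / 2 ≤ Real.pi / 2 := by
      rw [le_div_iff₀ hn0] at hx1
      nlinarith
    have ha : 2 / Real.pi * ((n : ℝ) * x / 2) ≤ Real.sin ((n : ℝ) * x / 2) :=
      Real.mul_le_sin (by positivity) hnx
    have ha0 : (0 : ℝ) ≤ 2 / Real.pi * ((n : ℝ) * x / 2) := by positivity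
    rw [div_div, div_le_div_iff₀ (by positivity) (by positivity)]
    have hsq : (2 / Real.pi * ((n : ℝ) * x / 2)) ^ 2 ≤ Real.sin ((n : ℝ) * x / 2) ^ 2 := by
      nlinarith
    have hbsq : Real.sin (x / 2) ^ 2 ≤ (x / 2) ^ 2 := by nlinarith
    have hc : Real.pi ^ 2 * (1 / (n : ℝ) * (2 / Real.pi * ((n : ℝ) * x / 2)) ^ 2) = (n : ℝ) * x ^ 2 := by
      field_simp
    nlinarith [mul_le_mul_of_nonneg_left hsq (by positivity : (0:ℝ) ≤ Real.pi ^ 2 * (1 / (n:ℝ)))]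
end

section
/- For every real x with 0 < x < π/2, one has 1/sin²(x) ≤ 1/x² + 1 − 4/π². -/
open Real Set

lemma aux_sin_lb {x : ℝ} (hx : 0 ≤ x) : x - x ^ 3 / 6 ≤ Real.sin x := by
  have hmono : MonotoneOn (fun t : ℝ => Real.sin t - t + t ^ 3 / 6) (Set.Icc 0 x) := by
    apply monotoneOn_of_deriv_nonneg (convex_Icc 0 x)
    · fun_prop
    · intro y hy
      exact ((Real.hasDerivAt_sin y).sub (hasDerivAt_id y) |>.add
        (((hasDerivAt_id y).pow 3).div_const 6)).differentiableAt.differentiableWithinAt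
    · intro y hy
      have hd : HasDerivAt (fun t : ℝ => Real.sin t - t + t ^ 3 / 6)
          (Real.cos y - 1 + y ^ 2 / 2) y := by
        have := ((Real.hasDerivAt_sin y).sub (hasDerivAt_id y)).add
          (((hasDerivAt_id y).pow 3).div_const 6)
        refine this.congr_deriv ?_
        simp; ring
      rw [hd.deriv]
      have := Real.one_sub_sq_div_two_le_cos (x := y)
      linarith
  have h0 : (0:ℝ) ∈ Set.Icc (0:ℝ) x := ⟨le_refl 0, hx⟩
  have hxm : x ∈ Set.Icc (0:ℝ) x := ⟨hx, le_refl x⟩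
  have := hmono h0 hxm hx
  simp at this
  linarith

lemma aux_cos_ub {x : ℝ} (hx : 0 ≤ x) : Real.cos x ≤ 1 - x ^ 2 / 2 + x ^ 4 / 24 := by
  have hmono : MonotoneOn (fun t : ℝ => 1 - t ^ 2 / 2 + t ^ 4 / 24 - Real.cos t)
      (Set.Icc 0 x) := by
    apply monotoneOn_of_deriv_nonneg (convex_Icc 0 x)
    · fun_prop
    · intro y hy
      exact ((((hasDerivAt_const y (1:ℝ)).sub (((hasDerivAt_id y).pow 2).div_const 2)).add
        (((hasDerivAt_id y).pow 4).div_const 24)).sub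
        (Real.hasDerivAt_cos y)).differentiableAt.differentiableWithinAt
    · intro y hy
      rw [interior_Icc] at hy
      have hy0 : 0 ≤ y := hy.1.le
      have hd : HasDerivAt (fun t : ℝ => 1 - t ^ 2 / 2 + t ^ 4 / 24 - Real.cos t)
          (-y + y ^ 3 / 6 + Real.sin y) y := by
        have := (((hasDerivAt_const y (1:ℝ)).sub (((hasDerivAt_id y).pow 2).div_const 2)).add
          (((hasDerivAt_id y).pow 4).div_const 24)).sub (Real.hasDerivAt_cos y)
        refine this.congr_deriv ?_
        simp; ring
      rw [hd.deriv]
      have := aux_sin_lb hy0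
      linarith
  have h0 : (0:ℝ) ∈ Set.Icc (0:ℝ) x := ⟨le_refl 0, hx⟩
  have hxm : x ∈ Set.Icc (0:ℝ) x := ⟨hx, le_refl x⟩
  have := hmono h0 hxm hx
  simp at this
  linarith [Real.cos_zero]

lemma aux_key {y : ℝ} (hy0 : 0 < y) (hy1 : y ≤ Real.pi / 2) :
    y ^ 3 * Real.cos y ≤ Real.sin y ^ 3 := by
  have hy3 : y < 1.6 := lt_of_le_of_lt hy1 (by linarith [Real.pi_lt_d2])
  have hlb : y - y ^ 3 / 6 ≤ Real.sin y := aux_sin_lb hy0.le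
  have hub : Real.cos y ≤ 1 - y ^ 2 / 2 + y ^ 4 / 24 := aux_cos_ub hy0.le
  have hysq : y ^ 2 ≤ 3 := by nlinarith
  have ha : 0 ≤ y - y ^ 3 / 6 := by nlinarith
  have h3 : (y - y ^ 3 / 6) ^ 3 ≤ Real.sin y ^ 3 := pow_le_pow_left₀ ha hlb 3
  have h4 : y ^ 3 * Real.cos y ≤ y ^ 3 * (1 - y ^ 2 / 2 + y ^ 4 / 24) :=
    mul_le_mul_of_nonneg_left hub (by positivity)
  have h5 : y ^ 3 * (1 - y ^ 2 / 2 + y ^ 4 / 24) ≤ (y - y ^ 3 / 6) ^ 3 := by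
    have h9 : 0 ≤ y ^ 7 * (9 - y ^ 2) := mul_nonneg (by positivity) (by nlinarith)
    nlinarith [h9]
  linarith

/-- for `0 < x < π/2`, `1/sin²x ≤ 1/x² + 1 − 4/π²`. -/
theorem one_div_sin_sq_le (x : ℝ) (hx0 : 0 < x) (hx1 : x < Real.pi / 2) :
    1 / Real.sin x ^ 2 ≤ 1 / x ^ 2 + 1 - 4 / Real.pi ^ 2 := by
  set f : ℝ → ℝ := fun y => 1 / Real.sin y ^ 2 - 1 / y ^ 2 with hf
  have hpi : 0 < Real.pi := Real.pi_pos
  have hmem : ∀ y ∈ Set.Icc x (Real.pi / 2), 0 < y ∧ y < Real.pi := by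
    intro y hy
    exact ⟨lt_of_lt_of_le hx0 hy.1, lt_of_le_of_lt hy.2 (by linarith)⟩
  have hsinpos : ∀ y ∈ Set.Icc x (Real.pi / 2), 0 < Real.sin y := by
    intro y hy
    exact Real.sin_pos_of_pos_of_lt_pi (hmem y hy).1 (hmem y hy).2
  have hderiv : ∀ y ∈ Set.Icc x (Real.pi / 2),
      HasDerivAt f (2 / y ^ 3 - 2 * Real.cos y / Real.sin y ^ 3) y := by
    intro y hy
    have hs := hsinpos y hy
    have hy0 := (hmem y hy).1
    have h1 : HasDerivAt (fun t => 1 / Real.sin t ^ 2)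
        ((0 * Real.sin y ^ 2 - 1 * (2 * Real.sin y ^ 1 * Real.cos y)) / (Real.sin y ^ 2) ^ 2) y :=
      (hasDerivAt_const y (1:ℝ)).div ((Real.hasDerivAt_sin y).pow 2)
        (by positivity)
    have h2 : HasDerivAt (fun t : ℝ => 1 / t ^ 2)
        ((0 * y ^ 2 - 1 * (2 * y ^ 1 * 1)) / (y ^ 2) ^ 2) y :=
      (hasDerivAt_const y (1:ℝ)).div ((hasDerivAt_id y).pow 2) (by positivity)
    have := h1.sub h2
    refine this.congr_deriv ?_
    field_simp
    ring
  have hmono : MonotoneOn f (Set.Icc x (Real.pi / 2)) := by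
    apply monotoneOn_of_deriv_nonneg (convex_Icc _ _)
    · intro y hy
      exact (hderiv y hy).continuousAt.continuousWithinAt
    · intro y hy
      rw [interior_Icc] at hy
      exact (hderiv y (Set.mem_Icc_of_Ioo hy)).differentiableAt.differentiableWithinAt
    · intro y hy
      rw [interior_Icc] at hy
      have hy' := Set.mem_Icc_of_Ioo hy
      rw [(hderiv y hy').deriv]
      have hs := hsinpos y hy'
      have hy0 := (hmem y hy').1
      have hkey := aux_key hy0 hy'.2
      have h1 : 2 * Real.cos y / Real.sin y ^ 3 ≤ 2 / y ^ 3 := by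
        rw [div_le_div_iff₀ (by positivity) (by positivity)]
        nlinarith
      linarith
  have hle : x ≤ Real.pi / 2 := hx1.le
  have := hmono ⟨le_refl x, hle⟩ ⟨hle, le_refl _⟩ hle
  have hsin : Real.sin (Real.pi / 2) = 1 := Real.sin_pi_div_two
  rw [hf] at this
  simp only [hsin, one_pow] at this
  have hπ2 : (1:ℝ) / (Real.pi / 2) ^ 2 = 4 / Real.pi ^ 2 := by
    field_simp; ring
  rw [hπ2] at this
  linarith
end

section
/- Assume the Setup with M ≥ 2, N ≥ 4M, and the separation condition. If j is an index such that |θ_k − a_j|_T > 1/N for every k = 0,…,M−1 (i.e. a_j lies outside every neighborhood I_k), then p_j ≤ σ/M + d_N, and moreover σ/M + d_N < τ/M, so p_j < τ/M. -/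
open scoped BigOperators

open Real Filter

section Aux

lemma distT_eq (x y : ℝ) :
    distT x y = min (Int.fract (x - y)) (1 - Int.fract (x - y)) := by
  set z := x - y with hz
  set n : ℤ := ⌊z⌋ with hn
  set u := Int.fract z with hudef
  have hu : u = z - n := rfl
  have hu0 : 0 ≤ u := Int.fract_nonneg z
  have hu1 : u < 1 := Int.fract_lt_one z
  have hlb : ∀ d ∈ {d : ℝ | ∃ k : ℤ, d = |x - y - (k : ℝ)|}, min u (1 - u) ≤ d := by
    rintro d ⟨k, rfl⟩
    rcases lt_trichotomy k n with hk | hk | hk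
    · have h2 : (k : ℝ) ≤ (n : ℝ) - 1 := by exact_mod_cast Int.le_sub_one_of_lt hk
      have h1 : z - k ≥ u + 1 := by rw [hu] at *; linarith
      have := le_abs_self (z - (k:ℝ))
      refine le_trans (min_le_right _ _) ?_
      rw [← hz]; linarith
    · subst hk
      rw [← hz, show z - (n:ℝ) = u from hu.symm, abs_of_nonneg hu0]
      exact min_le_left _ _
    · have h2 : (n : ℝ) + 1 ≤ (k : ℝ) := by exact_mod_cast hk
      have h1 : (k:ℝ) - z ≥ 1 - u := by rw [hu] at *; linarith
      have := neg_abs_le (z - (k:ℝ))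
      refine le_trans (min_le_right _ _) ?_
      rw [← hz]; linarith
  have hmem : min u (1 - u) ∈ {d : ℝ | ∃ k : ℤ, d = |x - y - (k : ℝ)|} := by
    rcases le_total u (1 - u) with h | h
    · exact ⟨n, by
        rw [← hz, min_eq_left h, show z - (n:ℝ) = u from hu.symm, abs_of_nonneg hu0]⟩
    · refine ⟨n + 1, ?_⟩
      rw [min_eq_right h]
      push_cast
      rw [show x - y - ((n : ℝ) + 1) = (z - n) - 1 by ring,
        show z - (n:ℝ) = u from hu.symm, abs_of_nonpos (by linarith), neg_sub]
  exact le_antisymm (csInf_le ⟨_, hlb⟩ hmem) (le_csInf ⟨_, hmem⟩ hlb)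

lemma sub_cube_le_sin : ∀ t : ℝ, 0 ≤ t → t - t ^ 3 / 6 ≤ Real.sin t := by
  have hd : ∀ x : ℝ, HasDerivAt (fun t : ℝ => Real.sin t - t + t ^ 3 / 6)
      (Real.cos x - 1 + x ^ 2 / 2) x := by
    intro x
    have h1 := ((Real.hasDerivAt_sin x).sub (hasDerivAt_id x)).add
      ((hasDerivAt_pow 3 x).div_const 6)
    exact h1.congr_deriv (by push_cast; ring)
  have hmono : Monotone (fun t : ℝ => Real.sin t - t + t ^ 3 / 6) := by
    apply monotone_of_deriv_nonneg
    · exact fun x => (hd x).differentiableAt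
    · intro x
      rw [(hd x).deriv]
      nlinarith [Real.one_sub_sq_div_two_le_cos (x := x)]
  intro t ht
  have := hmono ht
  simp only [Real.sin_zero] at this
  nlinarith [this]

lemma key_sin {t : ℝ} (h1 : 0 < t) (h2 : t ≤ Real.pi / 2) :
    1 / Real.sin t ^ 2 ≤ 1 / t ^ 2 + Real.pi ^ 2 / 12 := by
  have hpi := Real.pi_gt_d6
  have hpi2 := Real.pi_lt_d2
  have ht : t < 1.58 := by linarith
  have ht2 : t ^ 2 ≤ 2.5 := by nlinarith
  have hsin1 : 2 / Real.pi * t ≤ Real.sin t := Real.mul_le_sin h1.le h2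
  have hsinpos : 0 < Real.sin t := lt_of_lt_of_le (by positivity) hsin1
  have hcube : t - t ^ 3 / 6 ≤ Real.sin t := sub_cube_le_sin t h1.le
  have hcubepos : 0 ≤ t - t ^ 3 / 6 := by
    nlinarith [mul_nonneg h1.le (show (0:ℝ) ≤ 6 - t ^ 2 by linarith)]
  have hs2 : t ^ 2 - t ^ 4 / 3 ≤ Real.sin t ^ 2 := by
    nlinarith [pow_le_pow_left₀ hcubepos hcube 2, pow_two_nonneg (t ^ 3)]
  have hs1' : 4 * t ^ 2 ≤ Real.pi ^ 2 * Real.sin t ^ 2 := by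
    have h := pow_le_pow_left₀ (by positivity) hsin1 2
    have hp2 : (0:ℝ) < Real.pi ^ 2 := by positivity
    rw [mul_pow, div_pow] at h
    calc 4 * t ^ 2 = Real.pi ^ 2 * (2 ^ 2 / Real.pi ^ 2 * t ^ 2) := by
          field_simp; ring
      _ ≤ Real.pi ^ 2 * Real.sin t ^ 2 := by
          apply mul_le_mul_of_nonneg_left h hp2.le
  have hss : 0 < Real.sin t ^ 2 := by positivity
  have htt : 0 < t ^ 2 := by positivity
  rw [div_add_div _ _ (ne_of_gt htt) (by norm_num), div_le_div_iff₀ hss (by positivity)]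
  have hint := mul_le_mul_of_nonneg_left hs1' (le_of_lt htt)
  nlinarith [hint, hs2]

lemma star_half {u : ℝ} (h0 : 0 < u) (h2 : u ≤ 1 / 2) :
    1 / Real.sin (Real.pi * u) ^ 2 ≤ 1 / (Real.pi ^ 2 * u ^ 2) + Real.pi ^ 2 / 12 := by
  have hpi := Real.pi_pos
  have := key_sin (t := Real.pi * u) (by positivity) (by nlinarith)
  calc 1 / Real.sin (Real.pi * u) ^ 2 ≤ 1 / (Real.pi * u) ^ 2 + Real.pi ^ 2 / 12 := this
    _ = 1 / (Real.pi ^ 2 * u ^ 2) + Real.pi ^ 2 / 12 := by rw [mul_pow]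

lemma star {u : ℝ} (h0 : 0 < u) (h1 : u < 1) :
    1 / Real.sin (Real.pi * u) ^ 2 ≤
      1 / (Real.pi ^ 2 * u ^ 2) + 1 / (Real.pi ^ 2 * (1 - u) ^ 2) + Real.pi ^ 2 / 12 := by
  have hpi := Real.pi_pos
  rcases le_or_gt u (1/2) with h | h
  · have := star_half h0 h
    have hnn : 0 ≤ 1 / (Real.pi ^ 2 * (1 - u) ^ 2) := by positivity
    linarith
  · have h0' : 0 < 1 - u := by linarith
    have := star_half (u := 1 - u) h0' (by linarith)
    have hsin : Real.sin (Real.pi * (1 - u)) = Real.sin (Real.pi * u) := by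
      rw [show Real.pi * (1 - u) = Real.pi - Real.pi * u by ring, Real.sin_pi_sub]
    rw [hsin] at this
    have hnn : 0 ≤ 1 / (Real.pi ^ 2 * u ^ 2) := by positivity
    linarith

lemma fejDivHelper (A s n : ℝ) (hs : s ≠ 0) (hn : n ≠ 0) :
    1/n * A / s / n = A / (n^2 * s) := by
  field_simp
  try ring
  try exact Or.inl trivial

lemma fejAlg (n p x y : ℝ) :
    1/n * (1/(p*x) + 1/(p*y) + p/12) = 1/(n*p) * (1/x) + 1/(n*p) * (1/y) + p/(12*n) := by
  ring

lemma sep_sum : ∀ (n : ℕ) (c : ℝ), 0 < c → ∀ (d : ℝ), 0 ≤ d →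
    ∀ (s : Finset ℕ) (u : ℕ → ℝ), s.card = n → (∀ i ∈ s, c < u i) →
    (∀ i ∈ s, ∀ j ∈ s, i ≠ j → d ≤ |u i - u j|) →
    ∑ i ∈ s, 1 / u i ^ 2 ≤ ∑ i ∈ Finset.range n, 1 / (c + i * d) ^ 2 := by
  intro n
  induction n with
  | zero => intro c hc d hd s u hcard _ _
            rw [Finset.card_eq_zero] at hcard; subst hcard; simp
  | succ n ih =>
    intro c hc d hd s u hcard hlb hsep
    have hne : s.Nonempty := Finset.card_pos.mp (by omega)
    obtain ⟨i0, hi0, hmin⟩ := Finset.exists_min_image s u hne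
    have hstep : ∀ i ∈ s.erase i0, c + d < u i := by
      intro i hi
      have hi' := Finset.mem_of_mem_erase hi
      have hne' := Finset.ne_of_mem_erase hi
      have h1 := hmin i hi'
      have h2 := hsep i hi' i0 hi0 hne'
      rw [abs_of_nonneg (by linarith)] at h2
      have := hlb i0 hi0
      linarith
    have hrec := ih (c + d) (by linarith) d hd (s.erase i0) u
      (by rw [Finset.card_erase_of_mem hi0, hcard]; omega)
      hstep
      (fun i hi j hj hij => hsep i (Finset.mem_of_mem_erase hi) j
        (Finset.mem_of_mem_erase hj) hij)
    rw [← Finset.add_sum_erase s _ hi0, Finset.sum_range_succ']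
    have h0 : 1 / u i0 ^ 2 ≤ 1 / (c + (0:ℕ) * d) ^ 2 := by
      have := hlb i0 hi0
      push_cast
      rw [zero_mul, add_zero]
      apply one_div_le_one_div_of_le (by positivity)
      nlinarith
    have hterms : ∑ i ∈ Finset.range n, 1 / (c + d + i * d) ^ 2
        = ∑ i ∈ Finset.range n, 1 / (c + (↑(i + 1)) * d) ^ 2 := by
      apply Finset.sum_congr rfl
      intro i _
      push_cast
      ring_nf
    rw [← hterms] at *
    linarith [hrec]

lemma hasSum_aux (m : ℕ) :
    HasSum (fun i : ℕ => 1 / ((3 * (i:ℝ) + 3 * m + 1) * (3 * (i:ℝ) + 3 * m + 4)))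
      (1 / (3 * (3 * (m:ℝ) + 1))) := by
  set g : ℕ → ℝ := fun i => 1 / (9 * (i:ℝ) + 9 * m + 3) with hg
  have hpt : ∀ i : ℕ, 1 / ((3 * (i:ℝ) + 3 * m + 1) * (3 * (i:ℝ) + 3 * m + 4))
      = g i - g (i + 1) := by
    intro i
    have h1 : (0:ℝ) < 9 * (i:ℝ) + 9 * m + 3 := by positivity
    have h2 : (0:ℝ) < 9 * ((i:ℝ)+1) + 9 * m + 3 := by positivity
    simp only [hg]
    push_cast
    rw [div_sub_div _ _ (ne_of_gt h1) (ne_of_gt h2)]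
    rw [div_eq_div_iff (by positivity) (by positivity)]
    ring
  have hnn : ∀ i : ℕ, (0:ℝ) ≤ 1 / ((3 * (i:ℝ) + 3 * m + 1) * (3 * (i:ℝ) + 3 * m + 4)) := by
    intro i; positivity
  rw [hasSum_iff_tendsto_nat_of_nonneg hnn]
  have hsum : ∀ n : ℕ, ∑ i ∈ Finset.range n,
      1 / ((3 * (i:ℝ) + 3 * m + 1) * (3 * (i:ℝ) + 3 * m + 4)) = g 0 - g n := by
    intro n
    rw [Finset.sum_congr rfl (fun i _ => hpt i)]
    exact Finset.sum_range_sub' g n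
  simp only [hsum]
  have hg0 : g 0 = 1 / (3 * (3 * (m:ℝ) + 1)) := by
    simp only [hg]
    norm_num
    rw [show (9:ℝ) * m + 3 = 3 * (3 * m + 1) by ring, mul_inv]
    ring
  have hglim : Tendsto g atTop (nhds 0) := by
    simp only [hg, one_div]
    apply Tendsto.comp tendsto_inv_atTop_zero
    apply tendsto_atTop_add_const_right
    apply tendsto_atTop_add_const_right
    apply Tendsto.const_mul_atTop (by norm_num : (0:ℝ) < 9)
    exact tendsto_natCast_atTop_atTop
  have h := (tendsto_const_nhds (x := g 0) (f := atTop)).sub hglim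
  rw [sub_zero] at h
  rw [← hg0]
  exact h

set_option maxHeartbeats 1000000 in
lemma hsummable : Summable (fun l : ℕ => 1 / (3 * (l:ℝ) + 1) ^ 2) := by
  apply (summable_nat_add_iff 1).mp
  refine Summable.of_nonneg_of_le (fun i => by positivity) ?_ (hasSum_aux 0).summable
  intro i
  have h1 : (0:ℝ) < 3 * (i:ℝ) + 1 := by positivity
  have h4 : (0:ℝ) < 3 * (i:ℝ) + 4 := by positivity
  push_cast
  rw [div_le_div_iff₀ (by positivity) (by positivity)]
  nlinarith

set_option maxHeartbeats 1000000 in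
lemma tail_lb (m : ℕ) :
    1 / (3 * (3 * (m:ℝ) + 1)) ≤ ∑' i : ℕ, 1 / (3 * ((i + m : ℕ):ℝ) + 1) ^ 2 := by
  rw [← (hasSum_aux m).tsum_eq]
  apply Summable.tsum_le_tsum _ (hasSum_aux m).summable ((summable_nat_add_iff m).mpr hsummable)
  intro i
  have h1 : (0:ℝ) < 3 * (i:ℝ) + 3 * m + 1 := by positivity
  push_cast
  rw [div_le_div_iff₀ (by positivity) (by positivity)]
  nlinarith

set_option maxHeartbeats 1000000 in
lemma S_ub : ∑' l : ℕ, 1 / (3 * (l:ℝ) + 1) ^ 2 ≤ 4 / 3 := by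
  have h := Summable.sum_add_tsum_nat_add (f := fun l : ℕ => 1 / (3 * (l:ℝ) + 1) ^ 2) 1 hsummable
  have h2 : ∑' i : ℕ, 1 / (3 * ((i + 1 : ℕ):ℝ) + 1) ^ 2 ≤ 1 / (3 * (3 * ((0:ℕ):ℝ) + 1)) := by
    refine le_trans (Summable.tsum_le_tsum ?_ ((summable_nat_add_iff 1).mpr hsummable)
      (hasSum_aux 0).summable) (le_of_eq (hasSum_aux 0).tsum_eq)
    intro i
    have h1 : (0:ℝ) < 3 * (i:ℝ) + 1 := by positivity
    push_cast
    rw [div_le_div_iff₀ (by positivity) (by positivity)]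
    nlinarith
  have h1 : ∑ i ∈ Finset.range 1, 1 / (3 * (i:ℝ) + 1) ^ 2 = 1 := by norm_num
  rw [← h, h1]
  norm_num at h2 ⊢
  linarith

end Aux



set_option maxHeartbeats 2000000 in
/-- off-peak bound.  If `a_j` lies outside every neighborhood `I_k`
then `p_j ≤ σ/M + d_N`, and `σ/M + d_N < τ/M`, so `p_j < τ/M`. -/
theorem offpeak_bound
    (M N : ℕ) (hM : 2 ≤ M) (hN : 4 * M ≤ N)
    (θ : ℕ → ℝ)
    (hθ01 : ∀ k, k < M → θ k ∈ Set.Ico (0 : ℝ) 1)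
    (hθmono : ∀ k, k + 1 < M → θ k < θ (k + 1))
    (hθper : ∀ k, θ (k + M) = θ k)
    (hsep : ∀ k, (3 : ℝ) / (N : ℝ) ≤ distT (θ (k + 1)) (θ k))
    (j : ℤ)
    (hj : ∀ k, k < M → (1 : ℝ) / (N : ℝ) < distT (θ k) ((j : ℝ) / (N : ℝ))) :
    pdist M N θ j ≤ sigmaC / (M : ℝ) + dC N ∧
      sigmaC / (M : ℝ) + dC N < tauC / (M : ℝ) ∧
      pdist M N θ j < tauC / (M : ℝ) := by
  have hπ := Real.pi_pos
  have hπ1 := Real.pi_gt_d6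
  have hπ2 := Real.pi_lt_d6
  have hMR : (2:ℝ) ≤ (M:ℝ) := by exact_mod_cast hM
  have hNM : 4*(M:ℝ) ≤ (N:ℝ) := by exact_mod_cast hN
  have hMpos : (0:ℝ) < M := by linarith
  have hNpos : (0:ℝ) < N := by linarith
  have hN0 : (N:ℝ) ≠ 0 := ne_of_gt hNpos
  set a : ℝ := (j:ℝ)/(N:ℝ) with ha
  set u : ℕ → ℝ := fun k => Int.fract (θ k - a) with hudef
  have hu : ∀ k, k < M → 1/(N:ℝ) < u k ∧ u k < 1 - 1/(N:ℝ) := by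
    intro k hk
    have h := hj k hk
    rw [distT_eq, lt_min_iff] at h
    exact ⟨h.1, by linarith [h.2]⟩
  have huIoo : ∀ k, k < M → 0 < u k ∧ u k < 1 := by
    intro k hk
    have h := hu k hk
    have h0 : 0 < 1/(N:ℝ) := by positivity
    exact ⟨by linarith [h.1], by linarith [h.2]⟩
  have hgap : ∀ k, k+1 < M → 3/(N:ℝ) ≤ θ (k+1) - θ k := by
    intro k hk
    have h := hsep k
    have h1 := hθ01 k (by omega)
    have h2 := hθ01 (k+1) hk
    have h3 := hθmono k hk
    rw [distT_eq, Int.fract_eq_self.mpr ⟨by linarith [h3], by linarith [h1.1, h2.2]⟩] at h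
    exact le_trans h (min_le_left _ _)
  have hchain : ∀ k m : ℕ, k + m < M → 3*(m:ℝ)/(N:ℝ) ≤ θ (k+m) - θ k := by
    intro k m
    induction m with
    | zero => intro _; simp
    | succ m ih =>
      intro h
      have h1 := ih (by omega)
      have h2 := hgap (k+m) (by omega)
      have e2 : k + (m+1) = (k+m)+1 := by omega
      rw [e2]
      push_cast
      have e' : 3*((m:ℝ)+1)/(N:ℝ) = 3*(m:ℝ)/(N:ℝ) + 3/(N:ℝ) := by ring
      push_cast at h1
      linarith [h1, h2, e']
  have hmono' : ∀ k l, k ≤ l → l < M → θ k ≤ θ l := by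
    intro k l hkl hl
    obtain ⟨m, rfl⟩ := Nat.exists_eq_add_of_le hkl
    have h1 := hchain k m hl
    have h2 : (0:ℝ) ≤ 3*(m:ℝ)/N := by positivity
    linarith
  have hM1 : M - 1 + 1 = M := by omega
  have hwrap : 3/(N:ℝ) ≤ 1 + θ 0 - θ (M-1) := by
    have h := hsep (M-1)
    have hMθ : θ (M-1+1) = θ 0 := by rw [hM1, show M = 0 + M by omega, hθper]
    rw [hMθ, distT_eq] at h
    have h01 := hθ01 0 (by omega)
    have h02 := hθ01 (M-1) (by omega)
    have hlt : θ 0 < θ (M-1) := by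
      have h3 := hchain 0 (M-1) (by omega)
      rw [Nat.zero_add] at h3
      have hm1 : (1:ℝ) ≤ ((M-1:ℕ):ℝ) := by exact_mod_cast (show 1 ≤ M - 1 by omega)
      have h4 : 3*(1:ℝ)/(N:ℝ) ≤ 3*((M-1:ℕ):ℝ)/(N:ℝ) := by gcongr
      have h5 : (0:ℝ) < 3/(N:ℝ) := by positivity
      nlinarith
    have hfr : Int.fract (θ 0 - θ (M-1)) = θ 0 - θ (M-1) + 1 := by
      rw [← Int.fract_add_one, Int.fract_eq_self.mpr ⟨by linarith [h01.1, h02.2], by linarith⟩]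
    rw [hfr] at h
    have := le_trans h (min_le_left _ _)
    linarith
  have hpairsep : ∀ k l, k < M → l < M → k ≠ l → 3/(N:ℝ) ≤ |u k - u l| := by
    have main : ∀ k l, k < l → l < M → 3/(N:ℝ) ≤ |u k - u l| := by
      intro k l hkl hl
      have hg1 : 3/(N:ℝ) ≤ θ l - θ k := by
        obtain ⟨m, rfl⟩ := Nat.exists_eq_add_of_lt hkl
        have h1 := hchain k (m+1) (by omega)
        have e2 : k + (m+1) = k+m+1 := by omega
        rw [e2] at h1
        have hm1 : (1:ℝ) ≤ ((m+1:ℕ):ℝ) := by exact_mod_cast (show 1 ≤ m+1 by omega)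
        have h4 : 3*(1:ℝ)/(N:ℝ) ≤ 3*((m+1:ℕ):ℝ)/(N:ℝ) := by gcongr
        have h5 : 3*(1:ℝ)/(N:ℝ) = 3/(N:ℝ) := by ring
        linarith
      have hg2 : 3/(N:ℝ) ≤ 1 - (θ l - θ k) := by
        have h1 := hmono' l (M-1) (by omega) (by omega)
        have h2 := hmono' 0 k (by omega) (by omega)
        linarith [hwrap]
      set g : ℝ := θ l - θ k with hgdef
      set mm : ℤ := ⌊θ l - a⌋ - ⌊θ k - a⌋ with hmm
      have huv : u k - u l = (mm:ℝ) - g := by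
        simp only [hudef, Int.fract, hmm, hgdef]
        push_cast
        ring
      rcases le_or_gt mm 0 with hc | hc
      · have hc' : (mm:ℝ) ≤ 0 := by exact_mod_cast hc
        have habs := neg_abs_le (u k - u l)
        rw [huv] at habs ⊢
        linarith
      · have hc' : (1:ℝ) ≤ (mm:ℝ) := by exact_mod_cast hc
        have habs := le_abs_self (u k - u l)
        rw [huv] at habs ⊢
        linarith
    intro k l hk hl hkl
    rcases Nat.lt_or_ge k l with h | h
    · exact main k l h hl
    · have h' : l < k := by omega
      rw [abs_sub_comm]
      exact main l k h' hk
  have hfejer : ∀ k, k < M → fejerN N (2*Real.pi*(θ k - a)) ≤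
      1/((N:ℝ)^2*Real.pi^2) * (1/(u k)^2) + 1/((N:ℝ)^2*Real.pi^2) * (1/(1-u k)^2)
        + Real.pi^2/(12*(N:ℝ)^2) := by
    intro k hk
    obtain ⟨hu0k, hu1k⟩ := huIoo k hk
    have huk : u k = Int.fract (θ k - a) := by rw [hudef]
    have hnotint : ¬ ∃ m : ℤ, 2*Real.pi*(θ k - a) = 2*Real.pi*(m:ℝ) := by
      rintro ⟨m, hm⟩
      have h2π : (2*Real.pi) ≠ 0 := by positivity
      have hzm : θ k - a = (m:ℝ) := mul_left_cancel₀ h2π hm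
      have h0 : u k = 0 := by rw [huk, hzm, Int.fract_intCast]
      linarith
    have hsinz : Real.sin (Real.pi * (θ k - a))^2 = Real.sin (Real.pi * u k)^2 := by
      have e : Real.pi * (θ k - a) = Real.pi * u k + (⌊θ k - a⌋ : ℤ) * Real.pi := by
        rw [huk, Int.fract]
        push_cast
        ring
      rw [e, Real.sin_add_int_mul_pi]
      rcases Int.even_or_odd ⌊θ k - a⌋ with he | ho
      · rw [he.neg_one_zpow]; ring
      · rw [ho.neg_one_zpow]; ring
    have hsinpos : 0 < Real.sin (Real.pi * u k) :=
      Real.sin_pos_of_pos_of_lt_pi (mul_pos hπ hu0k) (by nlinarith [hu1k, hπ])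
    have hsinne : Real.sin (Real.pi * u k) ≠ 0 := ne_of_gt hsinpos
    have heval : fejerN N (2*Real.pi*(θ k - a)) =
        Real.sin ((N:ℝ)*(2*Real.pi*(θ k - a))/2)^2 / ((N:ℝ)^2 * Real.sin (Real.pi*u k)^2) := by
      rw [fejerN, fejer, if_neg hnotint, show (2*Real.pi*(θ k - a))/2 = Real.pi*(θ k - a) by ring,
        hsinz]
      exact fejDivHelper _ _ _ (pow_ne_zero 2 hsinne) hN0
    rw [heval]
    have hb : Real.sin ((N:ℝ)*(2*Real.pi*(θ k - a))/2)^2 / ((N:ℝ)^2 * Real.sin (Real.pi*u k)^2)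
        ≤ 1 / ((N:ℝ)^2 * Real.sin (Real.pi*u k)^2) := by
      have hden : (0:ℝ) < (N:ℝ)^2 * Real.sin (Real.pi*u k)^2 := by positivity
      exact (div_le_div_iff_of_pos_right hden).mpr (Real.sin_sq_le_one _)
    refine le_trans hb ?_
    have hstar := star hu0k hu1k
    have e : 1/((N:ℝ)^2 * Real.sin (Real.pi*u k)^2)
        = (1/(N:ℝ)^2) * (1/Real.sin (Real.pi*u k)^2) := by
      rw [one_div_mul_one_div]
    rw [e]
    calc (1/(N:ℝ)^2) * (1/Real.sin (Real.pi*u k)^2)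
        ≤ (1/(N:ℝ)^2) * (1/(Real.pi^2*(u k)^2) + 1/(Real.pi^2*(1-u k)^2) + Real.pi^2/12) :=
          mul_le_mul_of_nonneg_left hstar (by positivity)
      _ = 1/((N:ℝ)^2*Real.pi^2) * (1/(u k)^2) + 1/((N:ℝ)^2*Real.pi^2) * (1/(1-u k)^2)
          + Real.pi^2/(12*(N:ℝ)^2) :=
          fejAlg ((N:ℝ)^2) (Real.pi^2) ((u k)^2) ((1-u k)^2)
  have hcard : (Finset.range M).card = M := Finset.card_range M
  have hsep1 := sep_sum M (1/(N:ℝ)) (by positivity) (3/(N:ℝ)) (by positivity) (Finset.range M) u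
      hcard
      (fun i hi => (hu i (Finset.mem_range.mp hi)).1)
      (fun i hi j' hj' hij => hpairsep i j' (Finset.mem_range.mp hi) (Finset.mem_range.mp hj') hij)
  have hsep2 := sep_sum M (1/(N:ℝ)) (by positivity) (3/(N:ℝ)) (by positivity) (Finset.range M)
      (fun k => 1 - u k) hcard
      (fun i hi => by
        have := (hu i (Finset.mem_range.mp hi)).2
        linarith)
      (fun i hi j' hj' hij => by
        have h := hpairsep i j' (Finset.mem_range.mp hi) (Finset.mem_range.mp hj') hij
        rw [show (1 - u i) - (1 - u j') = -(u i - u j') by ring, abs_neg]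
        exact h)
  set SM : ℝ := ∑ i ∈ Finset.range M, 1/(3*(i:ℝ)+1)^2 with hSM
  have hRHS : ∑ i ∈ Finset.range M, 1/((1/(N:ℝ)) + (i:ℝ)*(3/(N:ℝ)))^2 = (N:ℝ)^2 * SM := by
    rw [hSM, Finset.mul_sum]
    apply Finset.sum_congr rfl
    intro i _
    have e : (1/(N:ℝ)) + (i:ℝ)*(3/(N:ℝ)) = (3*(i:ℝ)+1)/(N:ℝ) := by field_simp; ring
    rw [e, div_pow, one_div_div, mul_one_div]
  have hS1 : ∑ k ∈ Finset.range M, 1/(u k)^2 ≤ (N:ℝ)^2 * SM := by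
    rw [← hRHS]; exact hsep1
  have hS2 : ∑ k ∈ Finset.range M, 1/(1 - u k)^2 ≤ (N:ℝ)^2 * SM := by
    rw [← hRHS]; simpa using hsep2
  have hsum1 : ∑ k ∈ Finset.range M, fejerN N (2*Real.pi*(θ k - a)) ≤
      1/((N:ℝ)^2*Real.pi^2) * ((N:ℝ)^2*SM) + 1/((N:ℝ)^2*Real.pi^2) * ((N:ℝ)^2*SM)
        + (M:ℝ)*(Real.pi^2/(12*(N:ℝ)^2)) := by
    calc ∑ k ∈ Finset.range M, fejerN N (2*Real.pi*(θ k - a))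
        ≤ ∑ k ∈ Finset.range M, (1/((N:ℝ)^2*Real.pi^2) * (1/(u k)^2)
            + 1/((N:ℝ)^2*Real.pi^2) * (1/(1-u k)^2) + Real.pi^2/(12*(N:ℝ)^2)) := by
          apply Finset.sum_le_sum
          intro k hk
          exact hfejer k (Finset.mem_range.mp hk)
      _ = 1/((N:ℝ)^2*Real.pi^2) * (∑ k ∈ Finset.range M, 1/(u k)^2)
          + 1/((N:ℝ)^2*Real.pi^2) * (∑ k ∈ Finset.range M, 1/(1-u k)^2)
          + (M:ℝ)*(Real.pi^2/(12*(N:ℝ)^2)) := by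
          rw [Finset.sum_add_distrib, Finset.sum_add_distrib, ← Finset.mul_sum, ← Finset.mul_sum,
            Finset.sum_const, hcard, nsmul_eq_mul]
      _ ≤ _ := by
          have c1 : (0:ℝ) ≤ 1/((N:ℝ)^2*Real.pi^2) := by positivity
          have k1 := mul_le_mul_of_nonneg_left hS1 c1
          have k2 := mul_le_mul_of_nonneg_left hS2 c1
          linarith
  have hM0 : (M:ℝ) ≠ 0 := ne_of_gt hMpos
  have hπ0 : Real.pi ≠ 0 := ne_of_gt hπ
  have hpd : pdist M N θ j ≤ 2/((M:ℝ)*Real.pi^2) * SM + Real.pi^2/(12*(N:ℝ)^2) := by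
    rw [pdist, ← ha]
    have h1M : (0:ℝ) ≤ 1/(M:ℝ) := by positivity
    calc (1/(M:ℝ)) * ∑ k ∈ Finset.range M, fejerN N (2*Real.pi*(θ k - a))
        ≤ (1/(M:ℝ)) * (1/((N:ℝ)^2*Real.pi^2) * ((N:ℝ)^2*SM) + 1/((N:ℝ)^2*Real.pi^2) * ((N:ℝ)^2*SM)
            + (M:ℝ)*(Real.pi^2/(12*(N:ℝ)^2))) := mul_le_mul_of_nonneg_left hsum1 h1M
      _ = 2/((M:ℝ)*Real.pi^2) * SM + Real.pi^2/(12*(N:ℝ)^2) := by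
          field_simp
          ring
  set S : ℝ := ∑' l : ℕ, (1:ℝ)/(3*(l:ℝ)+1)^2 with hS
  have hsplit := Summable.sum_add_tsum_nat_add (f := fun l : ℕ => 1/(3*(l:ℝ)+1)^2) M hsummable
  have hTl := tail_lb M
  have hT : 1/(3*(3*(M:ℝ)+1)) ≤ S - SM := by
    have e := hsplit
    rw [← hSM] at e
    rw [← hS] at e
    linarith [hTl]
  have hp2l : (9.86960:ℝ) < Real.pi^2 := by nlinarith [hπ1, hπ]
  have hp2u : Real.pi^2 < (9.86961:ℝ) := by nlinarith [hπ2, hπ]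
  have hA : Real.pi^4 - 12*Real.pi^2 + 48 ≤ 27 := by nlinarith [hp2l, hp2u]
  have hnum : Real.pi^2/(12*(N:ℝ)^2) ≤ (1-4/Real.pi^2)/(N:ℝ)^2
      + 2/((M:ℝ)*Real.pi^2) * (1/(3*(3*(M:ℝ)+1))) := by
    have hrw : Real.pi^2/(12*(N:ℝ)^2) - (1-4/Real.pi^2)/(N:ℝ)^2
        = (Real.pi^4 - 12*Real.pi^2 + 48)/(12*Real.pi^2*(N:ℝ)^2) := by
      field_simp
      ring
    have h2 : 2/((M:ℝ)*Real.pi^2) * (1/(3*(3*(M:ℝ)+1)))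
        = 2/((M:ℝ)*Real.pi^2*(3*(3*(M:ℝ)+1))) := by
      rw [div_mul_div_comm, mul_one]
    have hcross : (Real.pi^4 - 12*Real.pi^2 + 48)/(12*Real.pi^2*(N:ℝ)^2)
        ≤ 2/((M:ℝ)*Real.pi^2*(3*(3*(M:ℝ)+1))) := by
      rw [div_le_div_iff₀ (by positivity) (by positivity)]
      have hq : 81*(M:ℝ)*(3*(M:ℝ)+1) ≤ 24*(N:ℝ)^2 := by nlinarith [hNM, hMR]
      have h27 := mul_le_mul_of_nonneg_right hA
        (show (0:ℝ) ≤ (M:ℝ)*Real.pi^2*(3*(3*(M:ℝ)+1)) by positivity)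
      have hq2 := mul_le_mul_of_nonneg_left hq (show (0:ℝ) ≤ Real.pi^2 by positivity)
      nlinarith [h27, hq2]
    linarith [hcross, hrw, h2]
  have goal1 : pdist M N θ j ≤ sigmaC/(M:ℝ) + dC N := by
    rw [sigmaC, dC, ← hS]
    have e3 : (2/Real.pi^2) * S / (M:ℝ)
        = 2/((M:ℝ)*Real.pi^2) * SM + 2/((M:ℝ)*Real.pi^2) * (S - SM) := by
      field_simp
      ring
    have hmul : 2/((M:ℝ)*Real.pi^2) * (1/(3*(3*(M:ℝ)+1))) ≤ 2/((M:ℝ)*Real.pi^2) * (S - SM) :=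
      mul_le_mul_of_nonneg_left hT (by positivity)
    linarith [hpd, hnum, hmul, e3]
  have goal2 : sigmaC/(M:ℝ) + dC N < tauC/(M:ℝ) := by
    rw [sigmaC, dC, tauC, ← hS]
    have hSub : S ≤ 4/3 := by rw [hS]; exact S_ub
    have h1 : (2/Real.pi^2)*S/(M:ℝ) ≤ (2/Real.pi^2)*(4/3)/(M:ℝ) := by gcongr
    have h2 : (1-4/Real.pi^2)/(N:ℝ)^2 < 4/(3*Real.pi^2)/(M:ℝ) := by
      have hp4 : (4:ℝ) < Real.pi^2 := by nlinarith [hπ1]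
      have hlt : (1-4/Real.pi^2) = (Real.pi^2-4)/Real.pi^2 := by field_simp
      rw [hlt, div_div, div_div]
      rw [div_lt_div_iff₀ (by positivity) (by positivity)]
      have hN2 : 16*(M:ℝ)^2 ≤ (N:ℝ)^2 := by nlinarith [hNM, hMR]
      have hpi2lt : Real.pi^2 < 10 := by nlinarith [hπ2, hπ]
      nlinarith [hN2, hpi2lt, hMR, mul_pos (mul_pos hπ hπ) hMpos,
        mul_le_mul_of_nonneg_left hN2 (show (0:ℝ) ≤ 4*Real.pi^2 by positivity),
        mul_le_mul_of_nonneg_left hMR (show (0:ℝ) ≤ 18*Real.pi^2*(M:ℝ) by positivity)]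
    have e4 : (2/Real.pi^2)*(4/3)/(M:ℝ) + 4/(3*Real.pi^2)/(M:ℝ) = 4/Real.pi^2/(M:ℝ) := by
      field_simp
      ring
    linarith [h1, h2, e4]
  exact ⟨goal1, goal2, lt_of_le_of_lt goal1 goal2⟩
end

section
/- Assume the Setup with M ≥ 2, N ≥ 4M, and the separation condition. Then for every k = 0,…,M−1, the detection set C intersects the neighborhood I_k: there exists an index j with 0 ≤ j ≤ N−1 such that a_j ∈ I_k and p_j ≥ τ/M. -/
open scoped BigOperators

open Real

lemma distT_le (x y : ℝ) (m : ℤ) : distT x y ≤ |x - y - (m : ℝ)| := by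
  apply csInf_le
  · exact ⟨0, by rintro d ⟨k, rfl⟩; exact abs_nonneg _⟩
  · exact ⟨m, rfl⟩

lemma fejer_nonneg (n : ℕ) (x : ℝ) : 0 ≤ fejer n x := by
  unfold fejer; split
  · positivity
  · positivity

lemma negone_zpow_sq (m : ℤ) : ((-1:ℝ)^m)^2 = 1 := by
  rw [sq, ← zpow_add₀ (by norm_num : (-1:ℝ) ≠ 0)]
  exact Even.neg_one_zpow ⟨m, rfl⟩

lemma fejer_add_int (n : ℕ) (x : ℝ) (m : ℤ) : fejer n (x + 2 * π * m) = fejer n x := by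
  unfold fejer
  have hcond : (∃ k : ℤ, x + 2*π*m = 2*π*(k:ℝ)) ↔ ∃ k : ℤ, x = 2*π*(k:ℝ) := by
    constructor
    · rintro ⟨k, hk⟩; exact ⟨k - m, by push_cast; linarith⟩
    · rintro ⟨k, hk⟩; exact ⟨k + m, by push_cast; linarith⟩
  by_cases hc : ∃ k : ℤ, x = 2*π*(k:ℝ)
  · rw [if_pos (hcond.mpr hc), if_pos hc]
  · rw [if_neg (fun h => hc (hcond.mp h)), if_neg hc]
    congr 1
    · congr 1
      have h : (n:ℝ) * (x + 2*π*m) / 2 = n*x/2 + ((n*m : ℤ) : ℝ) * π := by push_cast; ring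
      rw [h, Real.sin_add_int_mul_pi, mul_pow, negone_zpow_sq, one_mul]
    · have h : (x + 2*π*m)/2 = x/2 + (m:ℝ)*π := by ring
      have h' : (m:ℝ)*π = ((m:ℤ):ℝ)*π := by norm_cast
      rw [h, h', Real.sin_add_int_mul_pi, mul_pow, negone_zpow_sq, one_mul]

lemma fejerN_ge (n : ℕ) (hn : 1 ≤ n) (δ : ℝ) (hδ : |δ| ≤ 1/(2*(n:ℝ))) :
    4/π^2 ≤ fejerN n (2*π*δ) := by
  have hn0 : (0:ℝ) < n := by exact_mod_cast hn
  have hπ := Real.pi_pos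
  have hπ3 := Real.pi_gt_three
  have hn1 : (1:ℝ) ≤ n := by exact_mod_cast hn
  have hδhalf : |δ| ≤ 1/2 := le_trans hδ (by
    rw [div_le_div_iff₀ (by positivity) (by norm_num)]
    nlinarith)
  by_cases h0 : δ = 0
  · subst h0
    have : fejerN n (2*π*0) = 1 := by
      unfold fejerN fejer
      rw [if_pos ⟨0, by norm_num⟩]
      field_simp
    rw [this]
    rw [div_le_one (by positivity)]
    nlinarith
  · have hne : ¬∃ k : ℤ, 2*π*δ = 2*π*(k:ℝ) := by
      rintro ⟨kk, hkk⟩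
      have hδk : δ = (kk:ℝ) := by
        have h2π : (2*π) ≠ 0 := by positivity
        exact mul_left_cancel₀ h2π hkk
      have hk0 : kk = 0 := by
        have h1 : |(kk:ℝ)| ≤ 1/2 := by rw [← hδk]; exact hδhalf
        have h2 : ((|kk|:ℤ):ℝ) < 1 := by rw [Int.cast_abs]; linarith
        have h3 : |kk| < 1 := by exact_mod_cast h2
        rw [abs_lt] at h3
        omega
      exact h0 (by rw [hδk, hk0]; norm_num)
    unfold fejerN fejer
    rw [if_neg hne]
    have h1 : (n:ℝ) * (2*π*δ) / 2 = (n:ℝ)*(π*δ) := by ring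
    have h2 : (2*π*δ)/2 = π*δ := by ring
    rw [h1, h2]
    set t := π * δ with ht
    have ht0 : t ≠ 0 := by simp [ht]; exact h0
    have htabs : |t| ≤ π/2 := by
      rw [ht, abs_mul, abs_of_pos hπ]
      calc π * |δ| ≤ π * (1/2) := by nlinarith [abs_nonneg δ]
        _ = π/2 := by ring
    -- sin t ≠ 0
    have hsint : Real.sin t ≠ 0 := by
      have habs : 0 < |t| := abs_pos.mpr ht0
      have hs : 0 < Real.sin |t| := Real.sin_pos_of_pos_of_lt_pi habs (by linarith)
      rcases abs_cases t with ⟨h, _⟩ | ⟨h, _⟩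
      · rw [h] at hs; linarith
      · rw [h] at hs; rw [Real.sin_neg] at hs; intro hc; rw [hc] at hs; simp at hs
    have hupper : Real.sin t ^ 2 ≤ t ^ 2 := Real.sin_sq_le_sq
    have hlow : (4/π^2) * ((n:ℝ)*t)^2 ≤ Real.sin ((n:ℝ)*t) ^ 2 := by
      set u := |(n:ℝ)*t| with hu
      have hu0 : 0 ≤ u := abs_nonneg _
      have hu2 : u ≤ π/2 := by
        rw [hu, abs_mul, abs_of_pos hn0, ht, abs_mul, abs_of_pos hπ]
        calc (n:ℝ) * (π * |δ|) ≤ (n:ℝ) * (π * (1/(2*n))) := by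
              apply mul_le_mul_of_nonneg_left _ hn0.le
              exact mul_le_mul_of_nonneg_left hδ hπ.le
          _ = π/2 := by field_simp
      have hms := Real.mul_le_sin hu0 hu2
      have hsq : Real.sin u ^ 2 = Real.sin ((n:ℝ)*t) ^ 2 := by
        rcases abs_cases ((n:ℝ)*t) with ⟨h, _⟩ | ⟨h, _⟩
        · rw [hu, h]
        · rw [hu, h, Real.sin_neg, neg_sq]
      have hun : 0 ≤ 2/π*u := by positivity
      have hthis : (2/π*u)^2 ≤ Real.sin u ^ 2 := by
        apply sq_le_sq' _ hms
        linarith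
      rw [hsq] at hthis
      have habs2 : u^2 = ((n:ℝ)*t)^2 := by rw [hu]; exact sq_abs _
      calc (4/π^2) * ((n:ℝ)*t)^2 = (2/π*u)^2 := by
            rw [mul_pow (2/π) u, habs2]; field_simp; ring
        _ ≤ _ := hthis
    have heq : (1/(n:ℝ)) * Real.sin ((n:ℝ)*t) ^ 2 / Real.sin t ^ 2 / n
        = Real.sin ((n:ℝ)*t)^2 / ((n:ℝ)^2 * Real.sin t ^2) := by
      field_simp
    have hkey : (4:ℝ)/π^2 = (4/π^2 * ((n:ℝ)*t)^2) / ((n:ℝ)^2 * t^2) := by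
      field_simp
    rw [heq, hkey]
    apply div_le_div₀ (sq_nonneg _) hlow (by positivity)
    exact mul_le_mul_of_nonneg_left hupper (sq_nonneg _)

/-- the detection set `C` intersects every neighborhood `I_k`:
for each eigenphase there is a grid point within `1/N` with `p_j ≥ τ/M`. -/
theorem detection_set_meets_every_peak
    (M N : ℕ) (hM : 2 ≤ M) (hN : 4 * M ≤ N)
    (θ : ℕ → ℝ)
    (hθ01 : ∀ k, k < M → θ k ∈ Set.Ico (0 : ℝ) 1)
    (hθmono : ∀ k, k + 1 < M → θ k < θ (k + 1))
    (hθper : ∀ k, θ (k + M) = θ k)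
    (hsep : ∀ k, (3 : ℝ) / (N : ℝ) ≤ distT (θ (k + 1)) (θ k))
    (k : ℕ) (hk : k < M) :
    ∃ j : ℤ, 0 ≤ j ∧ j ≤ (N : ℤ) - 1 ∧
      distT ((j : ℝ) / (N : ℝ)) (θ k) ≤ 1 / (N : ℝ) ∧
      tauC / (M : ℝ) ≤ pdist M N θ j := by
  have hN0 : 0 < N := by omega
  have hN1 : 1 ≤ N := by omega
  have hNR : (0:ℝ) < N := by exact_mod_cast hN0
  set j0 : ℤ := round ((N:ℝ) * θ k) with hj0def
  have hround : |(N:ℝ)*θ k - j0| ≤ 1/2 := abs_sub_round _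
  have hNz : (N:ℤ) ≠ 0 := by exact_mod_cast hN0.ne'
  set j : ℤ := j0 % N with hjdef
  have hjnn : 0 ≤ j := Int.emod_nonneg _ hNz
  have hjlt : j < N := Int.emod_lt_of_pos _ (by exact_mod_cast hN0)
  set m : ℤ := j0 / N with hmdef
  have hjm : (j:ℤ) = j0 - N * m := by
    simp only [hjdef, hmdef]
    exact Int.emod_def j0 (N:ℤ)
  have hjr : (j:ℝ) = (j0:ℝ) - (N:ℝ)*(m:ℝ) := by exact_mod_cast congrArg (Int.cast : ℤ → ℝ) hjm
  have hδ : |θ k - (j:ℝ)/N - (m:ℝ)| ≤ 1/(2*(N:ℝ)) := by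
    have he : θ k - (j:ℝ)/N - (m:ℝ) = ((N:ℝ)*θ k - j0)/N := by
      rw [hjr]; field_simp; ring
    rw [he, abs_div, abs_of_pos hNR]
    calc |(N:ℝ)*θ k - j0| / N ≤ (1/2) / N := by gcongr
      _ = 1/(2*(N:ℝ)) := by ring
  refine ⟨j, hjnn, by omega, ?_, ?_⟩
  · calc distT ((j:ℝ)/N) (θ k) ≤ |(j:ℝ)/N - θ k - ((-m : ℤ):ℝ)| := distT_le _ _ (-m)
      _ = |θ k - (j:ℝ)/N - (m:ℝ)| := by
          rw [show (j:ℝ)/N - θ k - ((-m : ℤ):ℝ) = -(θ k - (j:ℝ)/N - (m:ℝ)) by push_cast; ring,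
            abs_neg]
      _ ≤ 1/(2*(N:ℝ)) := hδ
      _ ≤ 1/(N:ℝ) := by
          rw [div_le_div_iff₀ (by positivity) hNR]; linarith
  · have hterm : 4/Real.pi^2 ≤ fejerN N (2*Real.pi*(θ k - (j:ℝ)/N)) := by
      have he : 2*Real.pi*(θ k - (j:ℝ)/N)
          = 2*Real.pi*(θ k - (j:ℝ)/N - (m:ℝ)) + 2*Real.pi*(m:ℝ) := by ring
      unfold fejerN
      rw [he, fejer_add_int]
      exact fejerN_ge N hN1 _ hδ
    have hsum : fejerN N (2*Real.pi*(θ k - (j:ℝ)/N))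
        ≤ ∑ i ∈ Finset.range M, fejerN N (2*Real.pi*(θ i - (j:ℝ)/N)) := by
      apply Finset.single_le_sum (f := fun i => fejerN N (2*Real.pi*(θ i - (j:ℝ)/N)))
      · intro i _
        exact div_nonneg (fejer_nonneg _ _) (Nat.cast_nonneg _)
      · exact Finset.mem_range.mpr hk
    have hM0 : (0:ℝ) < M := by exact_mod_cast (by omega : 0 < M)
    have hle : 4/Real.pi^2 ≤ ∑ i ∈ Finset.range M, fejerN N (2*Real.pi*(θ i - (j:ℝ)/N)) :=
      le_trans hterm hsum
    unfold pdist tauC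
    calc 4/Real.pi^2/(M:ℝ) = (1/(M:ℝ))*(4/Real.pi^2) := by ring
      _ ≤ _ := mul_le_mul_of_nonneg_left hle (by positivity)
end

section
/- Assume the Setup with M ≥ 2, N ≥ 4M, and the separation condition. Then C ⊆ ⋃_{k=0}^{M−1} I_k: for every index j with 0 ≤ j ≤ N−1, if p_j ≥ τ/M then there exists k ∈ {0,…,M−1} with |θ_k − a_j|_T ≤ 1/N. -/
open scoped BigOperators

namespace DetAux


noncomputable def g (s : ℝ) : ℝ := 1 / (max 1 s) ^ 2

lemma g_nonneg (s : ℝ) : 0 ≤ g s := by unfold g; positivity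

lemma g_le_one (s : ℝ) : g s ≤ 1 := by
  unfold g
  rw [div_le_one (by positivity)]
  nlinarith [le_max_left 1 s]

lemma g_antitone {s t : ℝ} (h : s ≤ t) : g t ≤ g s := by
  unfold g
  have h1 : (0:ℝ) < max 1 s := lt_of_lt_of_le one_pos (le_max_left _ _)
  gcongr


lemma g_eq {s : ℝ} (h : 1 ≤ s) : g s = 1 / s ^ 2 := by
  unfold g; rw [max_eq_right h]

lemma distT_eq (x y : ℝ) :
    distT x y = min (Int.fract (x - y)) (1 - Int.fract (x - y)) := by
  have hbdd : BddBelow {d : ℝ | ∃ k : ℤ, d = |x - y - (k : ℝ)|} :=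
    ⟨0, by rintro d ⟨k, rfl⟩; positivity⟩
  have hf0 : 0 ≤ Int.fract (x - y) := Int.fract_nonneg _
  have hf1 : Int.fract (x - y) < 1 := Int.fract_lt_one _
  have hfr : Int.fract (x - y) = x - y - ⌊x - y⌋ := by rw [Int.self_sub_floor]
  apply le_antisymm
  · apply le_min
    · apply csInf_le hbdd
      exact ⟨⌊x - y⌋, by rw [abs_of_nonneg (by linarith)]; linarith⟩
    · apply csInf_le hbdd
      refine ⟨⌊x - y⌋ + 1, ?_⟩
      push_cast
      rw [abs_of_nonpos (by linarith)]
      linarith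
  · have hne : Set.Nonempty {d : ℝ | ∃ k : ℤ, d = |x - y - (k : ℝ)|} :=
      ⟨|x - y - ((0:ℤ):ℝ)|, ⟨0, rfl⟩⟩
    apply le_csInf hne
    rintro d ⟨k, rfl⟩
    have key : x - y - k = Int.fract (x - y) + ((⌊x - y⌋ - k : ℤ) : ℝ) := by
      push_cast; linarith
    rcases le_or_gt 0 (⌊x - y⌋ - k : ℤ) with hm | hm
    · have : (0:ℝ) ≤ ((⌊x - y⌋ - k : ℤ) : ℝ) := by exact_mod_cast hm
      rw [key, abs_of_nonneg (by linarith)]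
      have := min_le_left (Int.fract (x - y)) (1 - Int.fract (x - y))
      linarith
    · have : ((⌊x - y⌋ - k : ℤ) : ℝ) ≤ -1 := by
        have h9 : (⌊x - y⌋ - k : ℤ) ≤ -1 := by omega
        exact_mod_cast h9
      rw [key, abs_of_nonpos (by linarith)]
      have := min_le_right (Int.fract (x - y)) (1 - Int.fract (x - y))
      linarith

lemma head_bound {α β : ℝ} (hα : 0 ≤ α) (hβ : 0 ≤ β) (h : 3 ≤ α + β) :
    g α + g β ≤ 5 / 4 := by
  rcases le_or_gt α 1 with h1 | h1
  · have hβ2 : (2:ℝ) ≤ β := by linarith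
    have : g β ≤ 1 / 4 := by
      rw [g_eq (by linarith)]
      rw [div_le_div_iff₀ (by positivity) (by norm_num)]
      nlinarith
    have := g_le_one α
    linarith
  rcases le_or_gt β 1 with h2 | h2
  · have hα2 : (2:ℝ) ≤ α := by linarith
    have : g α ≤ 1 / 4 := by
      rw [g_eq (by linarith)]
      rw [div_le_div_iff₀ (by positivity) (by norm_num)]
      nlinarith
    have := g_le_one β
    linarith
  · rw [g_eq h1.le, g_eq h2.le]
    rw [div_add_div _ _ (by positivity) (by positivity), div_le_div_iff₀ (by positivity) (by norm_num)]
    nlinarith [mul_nonneg (sub_nonneg.2 h1.le) (sub_nonneg.2 h2.le), sq_nonneg (α*β - α - β + 1),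
      sq_nonneg (α - β), mul_pos (lt_trans one_pos h1) (lt_trans one_pos h2),
      sq_nonneg (α*β - 2), sq_nonneg (α + β - 3)]

lemma basel_aux (n : ℕ) :
    ∑ i ∈ Finset.range n, (1:ℝ) / ((i:ℝ) + 2) ^ 2 ≤ 2/3 - 2/(2*(n:ℝ)+3) := by
  induction n with
  | zero => norm_num
  | succ n ih =>
    rw [Finset.sum_range_succ]
    push_cast
    have key : (1:ℝ) / ((n:ℝ) + 2)^2 ≤ 2/(2*(n:ℝ)+3) - 2/(2*(n:ℝ)+5) := by
      have h1 : (0:ℝ) < 2*(n:ℝ)+3 := by positivity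
      have h2 : (0:ℝ) < 2*(n:ℝ)+5 := by positivity
      have h3 : (0:ℝ) < ((n:ℝ)+2)^2 := by positivity
      rw [div_sub_div _ _ (by positivity) (by positivity), div_le_div_iff₀ h3 (by positivity)]
      ring_nf
      nlinarith
    have e : 2*((n:ℝ)+1)+3 = 2*(n:ℝ)+5 := by ring
    rw [e]
    linarith

lemma basel (n : ℕ) : ∑ i ∈ Finset.range n, (1:ℝ) / ((i:ℝ) + 1) ^ 2 ≤ 5/3 := by
  cases n with
  | zero => norm_num
  | succ n =>
    rw [Finset.sum_range_succ']
    have h3 : ∑ i ∈ Finset.range n, (1:ℝ) / ((↑(i+1):ℝ) + 1) ^ 2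
        = ∑ i ∈ Finset.range n, (1:ℝ) / ((i:ℝ) + 2) ^ 2 := by
      apply Finset.sum_congr rfl; intro i _; push_cast; ring_nf
    rw [h3]
    have h1 : ∑ i ∈ Finset.range n, (1:ℝ) / ((i:ℝ) + 2) ^ 2 ≤ 2/3 := by
      have := basel_aux n
      have h2 : (0:ℝ) < 2*(n:ℝ)+3 := by positivity
      have : (0:ℝ) ≤ 2/(2*(n:ℝ)+3) := by positivity
      linarith
    have h0 : (1:ℝ) / ((↑(0:ℕ):ℝ) + 1) ^ 2 = 1 := by norm_num
    rw [h0]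
    linarith

lemma sum_g_le (M : ℕ) (α : ℝ) (hα : 0 ≤ α) :
    ∑ i ∈ Finset.range M, g (α + 3 * (i:ℝ)) ≤ g α + 5/27 := by
  cases M with
  | zero => simp only [Finset.range_zero, Finset.sum_empty]; have := g_nonneg α; linarith
  | succ n =>
    rw [Finset.sum_range_succ']
    simp only [Nat.cast_zero, mul_zero, add_zero, Nat.cast_add, Nat.cast_one]
    have h1 : ∑ i ∈ Finset.range n, g (α + 3 * ((i:ℝ) + 1)) ≤ 5/27 := by
      have hterm : ∀ i ∈ Finset.range n, g (α + 3 * ((i:ℝ) + 1)) ≤ (1/9) * (1 / ((i:ℝ)+1)^2) := by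
        intro i _
        have h3 : (1:ℝ) ≤ 3 * ((i:ℝ)+1) := by
          have : (0:ℝ) ≤ (i:ℝ) := Nat.cast_nonneg i
          linarith
        have h4 : (1:ℝ) ≤ α + 3 * ((i:ℝ)+1) := by linarith
        rw [g_eq h4]
        have h5 : (0:ℝ) < 3*((i:ℝ)+1) := by positivity
        have h6 : (3*((i:ℝ)+1))^2 ≤ (α + 3*((i:ℝ)+1))^2 := by nlinarith
        calc (1:ℝ) / (α + 3 * ((i:ℝ)+1))^2 ≤ 1 / (3*((i:ℝ)+1))^2 := by
              apply one_div_le_one_div_of_le (by positivity) h6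
          _ = (1/9) * (1 / ((i:ℝ)+1)^2) := by field_simp; ring
      calc ∑ i ∈ Finset.range n, g (α + 3 * ((i:ℝ) + 1))
          ≤ ∑ i ∈ Finset.range n, (1/9) * (1 / ((i:ℝ)+1)^2) := Finset.sum_le_sum hterm
        _ = (1/9) * ∑ i ∈ Finset.range n, (1 / ((i:ℝ)+1)^2) := by rw [Finset.mul_sum]
        _ ≤ (1/9) * (5/3) := by have := basel n; linarith
        _ = 5/27 := by norm_num
    linarith

lemma sumbound (M : ℕ) (α β : ℝ) (hα : 0 ≤ α) (hβ : 0 ≤ β) (hs : 3 ≤ α + β) :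
    (∑ i ∈ Finset.range M, g (α + 3 * (i:ℝ))) + (∑ i ∈ Finset.range M, g (β + 3 * (i:ℝ)))
      ≤ 175 / 108 := by
  have h1 := sum_g_le M α hα
  have h2 := sum_g_le M β hβ
  have h3 := head_bound hα hβ hs
  linarith



lemma sin_sq_fract (δ : ℝ) :
    (Real.sin (Real.pi * δ)) ^ 2 = (Real.sin (Real.pi * Int.fract δ)) ^ 2 := by
  have hd : Real.pi * δ = Real.pi * Int.fract δ + (⌊δ⌋ : ℤ) * Real.pi := by
    have : Int.fract δ = δ - ⌊δ⌋ := by rw [Int.self_sub_floor]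
    rw [this]; ring
  rw [hd, Real.sin_add_int_mul_pi]
  rw [mul_pow]
  have : ((-1 : ℝ) ^ (⌊δ⌋ : ℤ)) ^ 2 = 1 := by
    rw [← zpow_natCast ((-1:ℝ)^(⌊δ⌋:ℤ)), ← zpow_mul]
    have : (⌊δ⌋ : ℤ) * (2:ℕ) = 2 * ⌊δ⌋ := by ring
    rw [this, zpow_mul]
    norm_num
  rw [this, one_mul]

lemma two_min_le_sin_fract (δ : ℝ) :
    2 * min (Int.fract δ) (1 - Int.fract δ) ≤ Real.sin (Real.pi * Int.fract δ) := by
  set f := Int.fract δ with hf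
  have hf0 : 0 ≤ f := Int.fract_nonneg _
  have hf1 : f < 1 := Int.fract_lt_one _
  have hpi := Real.pi_pos
  rcases le_or_gt f (1/2) with h | h
  · have h1 : 2 / Real.pi * (Real.pi * f) ≤ Real.sin (Real.pi * f) :=
      Real.mul_le_sin (by positivity) (by nlinarith)
    have h2 : 2 / Real.pi * (Real.pi * f) = 2 * f := by field_simp
    have h3 : min f (1 - f) ≤ f := min_le_left _ _
    nlinarith
  · have hs : Real.sin (Real.pi * f) = Real.sin (Real.pi * (1 - f)) := by
      rw [show Real.pi * (1 - f) = Real.pi - Real.pi * f by ring, Real.sin_pi_sub]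
    have h1 : 2 / Real.pi * (Real.pi * (1 - f)) ≤ Real.sin (Real.pi * (1 - f)) :=
      Real.mul_le_sin (by nlinarith) (by nlinarith)
    have h2 : 2 / Real.pi * (Real.pi * (1 - f)) = 2 * (1 - f) := by field_simp
    have h3 : min f (1 - f) ≤ 1 - f := min_le_right _ _
    nlinarith [hs]

lemma fejerN_le (n : ℕ) (hn : 0 < n) (δ : ℝ) (hδ : Int.fract δ ≠ 0) :
    fejerN n (2 * Real.pi * δ) ≤
      1 / (2 * (n : ℝ) * min (Int.fract δ) (1 - Int.fract δ)) ^ 2 := by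
  have hpi := Real.pi_pos
  have hf0 : 0 ≤ Int.fract δ := Int.fract_nonneg _
  have hf1 : Int.fract δ < 1 := Int.fract_lt_one _
  set d := min (Int.fract δ) (1 - Int.fract δ) with hd
  have hd0 : 0 < d := by
    apply lt_min
    · exact lt_of_le_of_ne hf0 (Ne.symm hδ)
    · linarith
  have hn0 : (0:ℝ) < n := by exact_mod_cast hn
  have hcond : ¬ ∃ k : ℤ, 2 * Real.pi * δ = 2 * Real.pi * (k : ℝ) := by
    rintro ⟨k, hk⟩
    have : δ = (k : ℝ) :=
      mul_left_cancel₀ (by positivity : (2 * Real.pi) ≠ 0) hk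
    rw [this] at hδ
    exact hδ (Int.fract_intCast k)
  have hsin : 2 * d ≤ Real.sin (Real.pi * Int.fract δ) := two_min_le_sin_fract δ
  have hsq : (2 * d)^2 ≤ (Real.sin (2 * Real.pi * δ / 2))^2 := by
    have e : 2 * Real.pi * δ / 2 = Real.pi * δ := by ring
    rw [e, sin_sq_fract δ]
    have := pow_le_pow_left₀ (by linarith) hsin 2
    exact this
  have hsinpos : 0 < (Real.sin (2 * Real.pi * δ / 2))^2 := lt_of_lt_of_le (by positivity) hsq
  rw [fejerN, fejer, if_neg hcond]
  have hnum : (Real.sin ((n : ℝ) * (2 * Real.pi * δ) / 2))^2 ≤ 1 := Real.sin_sq_le_one _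
  calc (1 / (n:ℝ)) * (Real.sin ((n : ℝ) * (2 * Real.pi * δ) / 2)) ^ 2
        / (Real.sin (2 * Real.pi * δ / 2)) ^ 2 / (n:ℝ)
      ≤ (1 / (n:ℝ)) * 1 / ((2*d)^2) / (n:ℝ) := by
        gcongr
      _ = 1 / (2 * (n:ℝ) * d)^2 := by field_simp


end DetAux

set_option maxHeartbeats 1000000 in
/-- no false positives, `C ⊆ ⋃ₖ I_k`: every grid point with
`p_j ≥ τ/M` lies within `1/N` of some eigenphase. -/
theorem detection_set_subset_neighborhoods
    (M N : ℕ) (hM : 2 ≤ M) (hN : 4 * M ≤ N)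
    (θ : ℕ → ℝ)
    (hθ01 : ∀ k, k < M → θ k ∈ Set.Ico (0 : ℝ) 1)
    (hθmono : ∀ k, k + 1 < M → θ k < θ (k + 1))
    (hθper : ∀ k, θ (k + M) = θ k)
    (hsep : ∀ k, (3 : ℝ) / (N : ℝ) ≤ distT (θ (k + 1)) (θ k))
    (j : ℤ) (hj0 : 0 ≤ j) (hj1 : j ≤ (N : ℤ) - 1)
    (hpj : tauC / (M : ℝ) ≤ pdist M N θ j) :
    ∃ k : ℕ, k < M ∧ distT (θ k) ((j : ℝ) / (N : ℝ)) ≤ 1 / (N : ℝ) := by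
  classical
  by_contra hcon
  push_neg at hcon
  have hM0 : 0 < M := by omega
  have hN0 : 0 < N := by omega
  have hNr : (0:ℝ) < N := by exact_mod_cast hN0
  have hMr : (0:ℝ) < M := by exact_mod_cast hM0
  set t : ℝ := (j:ℝ) / N with ht
  have ht0 : 0 ≤ t := by
    rw [ht]
    apply div_nonneg _ hNr.le
    exact_mod_cast hj0
  have ht1 : t ≤ 1 := by
    rw [ht, div_le_one hNr]
    exact_mod_cast (by omega : j ≤ (N:ℤ))
  have hθ0 : ∀ k, k < M → 0 ≤ θ k := fun k hk => (hθ01 k hk).1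
  have hθ1 : ∀ k, k < M → θ k < 1 := fun k hk => (hθ01 k hk).2
  -- consecutive gap, multiplied form
  have hgap : ∀ k, k + 1 < M → 3 ≤ (N:ℝ) * (θ (k+1) - θ k) := by
    intro k hk
    have h1 := hsep k
    have hlt := hθmono k hk
    rw [DetAux.distT_eq] at h1
    have hfr : Int.fract (θ (k+1) - θ k) = θ (k+1) - θ k :=
      Int.fract_eq_self.mpr ⟨by linarith,
        by have := hθ1 (k+1) hk; have := hθ0 k (by omega); linarith⟩
    rw [hfr] at h1
    have h2 : 3/(N:ℝ) ≤ θ (k+1) - θ k := le_trans h1 (min_le_left _ _)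
    rw [div_le_iff₀ hNr] at h2
    linarith
  have hchain : ∀ d k, k + d < M → 3 * (d:ℝ) ≤ (N:ℝ) * (θ (k+d) - θ k) := by
    intro d
    induction d with
    | zero => intro k _; simp
    | succ d ih =>
      intro k hk
      have h1 := ih k (by omega)
      have h2 := hgap (k+d) (by omega)
      have e : k + (d+1) = (k+d)+1 := by omega
      rw [e]
      have e2 : (N:ℝ)*(θ ((k+d)+1) - θ k)
          = (N:ℝ)*(θ ((k+d)+1) - θ (k+d)) + (N:ℝ)*(θ (k+d) - θ k) := by ring
      push_cast
      linarith [e2.ge, e2.le]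
  -- wrap-around gap
  have hwrap : 3 ≤ (N:ℝ) * (1 - (θ (M-1) - θ 0)) := by
    have h1 := hsep (M-1)
    have eM : M - 1 + 1 = M := by omega
    rw [eM] at h1
    have e0 : θ M = θ 0 := by have := hθper 0; rwa [zero_add] at this
    rw [e0] at h1
    have hlt : θ 0 < θ (M-1) := by
      have h01 := hθmono 0 (by omega)
      rcases Nat.lt_or_ge 2 M with hM2 | hM2
      · have hc := hchain (M-2) 1 (by omega)
        have e1 : 1 + (M-2) = M - 1 := by omega
        rw [e1] at hc
        have : (0:ℝ) ≤ 3 * ((M-2 : ℕ):ℝ) := by positivity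
        nlinarith
      · have : M = 2 := by omega
        rw [this]
        simpa using h01
    rw [DetAux.distT_eq] at h1
    have hb1 : (0:ℝ) ≤ θ 0 - θ (M-1) + 1 := by
      have := hθ1 (M-1) (by omega); have := hθ0 0 (by omega); linarith
    have hb2 : θ 0 - θ (M-1) + 1 < 1 := by linarith
    have hfr : Int.fract (θ 0 - θ (M-1)) = θ 0 - θ (M-1) + 1 := by
      have h := Int.fract_add_intCast (θ 0 - θ (M-1)) 1
      rw [show ((1:ℤ):ℝ) = 1 by norm_num] at h
      rw [← h]
      exact Int.fract_eq_self.mpr ⟨hb1, hb2⟩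
    rw [hfr] at h1
    have h2 : 3/(N:ℝ) ≤ θ 0 - θ (M-1) + 1 := le_trans h1 (min_le_left _ _)
    rw [div_le_iff₀ hNr] at h2
    linarith
  -- the pivot index m
  have hex : ∃ k, M ≤ k ∨ t ≤ θ k := ⟨M, Or.inl le_rfl⟩
  obtain ⟨m, hmP, hmmin⟩ : ∃ m, (M ≤ m ∨ t ≤ θ m) ∧ ∀ k, k < m → ¬(M ≤ k ∨ t ≤ θ k) :=
    ⟨Nat.find hex, Nat.find_spec hex, fun k hk => Nat.find_min hex hk⟩
  have hmM : m ≤ M := by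
    by_contra h
    exact (hmmin M (by omega)) (Or.inl le_rfl)
  have hm_lt : ∀ k, k < m → θ k < t := by
    intro k hk
    have := hmmin k hk
    push_neg at this
    exact this.2
  have htm : m < M → t ≤ θ m := by
    intro h
    rcases hmP with h' | h'
    · omega
    · exact h'
  -- fract values
  have hw1 : ∀ k, m ≤ k → k < M → Int.fract (θ k - t) = θ k - t := by
    intro k h1 h2
    have hmM' : m < M := lt_of_le_of_lt h1 h2
    have hc := hchain (k-m) m (by omega)
    have e : m + (k-m) = k := by omega
    rw [e] at hc
    have h3 : (0:ℝ) ≤ 3 * ((k-m : ℕ):ℝ) := by positivity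
    have h4 : θ m ≤ θ k := by nlinarith
    exact Int.fract_eq_self.mpr ⟨by have := htm hmM'; linarith,
      by have := hθ1 k h2; linarith⟩
  have hw2 : ∀ k, k < m → Int.fract (θ k - t) = θ k - t + 1 := by
    intro k hk
    have hkM : k < M := by omega
    have hlt := hm_lt k hk
    have h := Int.fract_add_intCast (θ k - t) 1
    rw [show ((1:ℤ):ℝ) = 1 by norm_num] at h
    rw [← h]
    exact Int.fract_eq_self.mpr ⟨by have := hθ0 k hkM; linarith, by linarith⟩
  -- sigma and its inverse
  set σ : ℕ → ℕ := fun k => if k < m then k + (M - m) else k - m with hσ_def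
  set τ : ℕ → ℕ := fun i => if i < M - m then i + m else i - (M - m) with hτ_def
  -- alpha and beta
  set α : ℝ := if m < M then (N:ℝ) * (θ m - t) else (N:ℝ) * (θ 0 + 1 - t) with hα_def
  set β : ℝ := if 0 < m then (N:ℝ) * (t - θ (m-1)) else (N:ℝ) * (1 - θ (M-1) + t) with hβ_def
  have hα0 : 0 ≤ α := by
    rw [hα_def]
    split_ifs with h
    · have h2 : (0:ℝ) ≤ θ m - t := by have := htm h; linarith
      positivity
    · have := hθ0 0 hM0
      have h2 : (0:ℝ) ≤ θ 0 + 1 - t := by linarith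
      positivity
  have hβ0 : 0 ≤ β := by
    rw [hβ_def]
    split_ifs with h
    · have := hm_lt (m-1) (by omega)
      have h2 : (0:ℝ) ≤ t - θ (m-1) := by linarith
      positivity
    · have := hθ1 (M-1) (by omega)
      have h2 : (0:ℝ) ≤ 1 - θ (M-1) + t := by linarith
      positivity
  have hαβ : 3 ≤ α + β := by
    rw [hα_def, hβ_def]
    split_ifs with h1 h2
    · -- 0 < m < M
      have hg := hgap (m-1) (by omega)
      have e : m - 1 + 1 = m := by omega
      rw [e] at hg
      linarith [hg]
    · -- m = 0, m < M
      have hm0 : m = 0 := by omega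
      rw [hm0]
      linarith [hwrap]
    · -- m = M, 0 < m
      have hmeq : m = M := by omega
      rw [hmeq]
      linarith [hwrap]
    · omega
  -- key inequality A
  have hA : ∀ k, k < M → α + 3 * ((σ k : ℕ):ℝ) ≤ (N:ℝ) * Int.fract (θ k - t) := by
    intro k hk
    by_cases hkm : k < m
    · have hwk := hw2 k hkm
      have hσk : σ k = k + (M - m) := by rw [hσ_def]; simp [hkm]
      rw [hwk, hσk]
      have ecast : ((k + (M - m) : ℕ):ℝ) = (k:ℝ) + (M:ℝ) - (m:ℝ) := by
        rw [Nat.cast_add, Nat.cast_sub hmM]; ring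
      rw [ecast]
      have c0 := hchain k 0 (by omega)
      rw [zero_add] at c0
      by_cases hmM' : m < M
      · rw [hα_def, if_pos hmM']
        have c2 := hchain (M-1-m) m (by omega)
        have e2 : m + (M-1-m) = M - 1 := by omega
        rw [e2] at c2
        have e3 : ((M - 1 - m : ℕ):ℝ) = (M:ℝ) - 1 - (m:ℝ) := by
          rw [Nat.cast_sub (by omega : m ≤ M - 1), Nat.cast_sub (by omega : 1 ≤ M)]
          norm_num
        rw [e3] at c2
        linarith [hwrap, c0, c2]
      · rw [hα_def, if_neg hmM']
        have hmeq : m = M := by omega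
        have : (m:ℝ) = (M:ℝ) := by exact_mod_cast hmeq
        linarith [c0]
    · have hmM' : m < M := by omega
      have hwk := hw1 k (by omega) hk
      have hσk : σ k = k - m := by rw [hσ_def]; simp [hkm]
      rw [hwk, hσk, hα_def, if_pos hmM']
      have ecast : ((k - m : ℕ):ℝ) = (k:ℝ) - (m:ℝ) := Nat.cast_sub (by omega)
      rw [ecast]
      have c := hchain (k-m) m (by omega)
      have e : m + (k-m) = k := by omega
      rw [e] at c
      rw [ecast] at c
      linarith [c]
  -- key inequality B
  have hB : ∀ k, k < M → β + 3 * ((M - 1 - σ k : ℕ):ℝ) ≤ (N:ℝ) * (1 - Int.fract (θ k - t)) := by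
    intro k hk
    by_cases hkm : k < m
    · have hwk := hw2 k hkm
      have hσk : σ k = k + (M - m) := by rw [hσ_def]; simp [hkm]
      have enat : M - 1 - σ k = m - 1 - k := by rw [hσk]; omega
      rw [hwk, enat]
      have hm0 : 0 < m := by omega
      rw [hβ_def, if_pos hm0]
      have ecast : ((m - 1 - k : ℕ):ℝ) = (m:ℝ) - 1 - (k:ℝ) := by
        rw [Nat.cast_sub (by omega : k ≤ m - 1), Nat.cast_sub (by omega : 1 ≤ m)]
        norm_num
      rw [ecast]
      have c := hchain (m-1-k) k (by omega)
      have e : k + (m-1-k) = m - 1 := by omega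
      rw [e] at c
      have e3 : ((m - 1 - k : ℕ):ℝ) = (m:ℝ) - 1 - (k:ℝ) := ecast
      rw [e3] at c
      linarith [c]
    · have hσk : σ k = k - m := by rw [hσ_def]; simp [hkm]
      have hwk := hw1 k (by omega) hk
      have enat : M - 1 - σ k = M - 1 - k + m := by rw [hσk]; omega
      rw [hwk, enat]
      have ecast : ((M - 1 - k + m : ℕ):ℝ) = (M:ℝ) - 1 - (k:ℝ) + (m:ℝ) := by
        rw [Nat.cast_add, Nat.cast_sub (by omega : k ≤ M - 1), Nat.cast_sub (by omega : 1 ≤ M)]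
        norm_num
      rw [ecast]
      have c1 := hchain (M-1-k) k (by omega)
      have e : k + (M-1-k) = M - 1 := by omega
      rw [e] at c1
      have e3 : ((M - 1 - k : ℕ):ℝ) = (M:ℝ) - 1 - (k:ℝ) := by
        rw [Nat.cast_sub (by omega : k ≤ M - 1), Nat.cast_sub (by omega : 1 ≤ M)]
        norm_num
      rw [e3] at c1
      by_cases hm0 : 0 < m
      · rw [hβ_def, if_pos hm0]
        have c3 := hchain (m-1) 0 (by omega)
        rw [zero_add] at c3
        have e4 : ((m - 1 : ℕ):ℝ) = (m:ℝ) - 1 := by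
          rw [Nat.cast_sub (by omega : 1 ≤ m)]; norm_num
        rw [e4] at c3
        linarith [hwrap, c1, c3]
      · rw [hβ_def, if_neg hm0]
        have : (m:ℝ) = 0 := by
          have : m = 0 := by omega
          exact_mod_cast this
        linarith [c1]
  -- per-term bound
  have hterm : ∀ k ∈ Finset.range M, fejerN N (2*Real.pi*(θ k - t)) ≤
      (1/4) * (DetAux.g ((N:ℝ) * Int.fract (θ k - t))
        + DetAux.g ((N:ℝ) * (1 - Int.fract (θ k - t)))) := by
    intro k hk'
    have hk : k < M := Finset.mem_range.mp hk'
    have hdist := hcon k hk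
    rw [DetAux.distT_eq] at hdist
    set f := Int.fract (θ k - t) with hf_def
    have hd1 : 1 < (N:ℝ) * min f (1 - f) := by
      rw [div_lt_iff₀ hNr] at hdist
      linarith
    have hf0 : 0 ≤ f := Int.fract_nonneg _
    have hf1 : f < 1 := Int.fract_lt_one _
    have hdk0 : 0 < min f (1 - f) := by
      rcases mul_pos_iff.mp (lt_trans one_pos hd1) with ⟨_, h⟩ | ⟨h, _⟩
      · exact h
      · linarith
    have hfne : f ≠ 0 := by
      intro h0
      rw [h0] at hdk0
      simp at hdk0
    have hb := DetAux.fejerN_le N hN0 (θ k - t) hfne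
    refine le_trans hb ?_
    rcases le_total f (1 - f) with hc | hc
    · have hdke : min f (1 - f) = f := min_eq_left hc
      rw [hdke] at hd1 ⊢
      have hge := DetAux.g_eq hd1.le
      have hg2 := DetAux.g_nonneg ((N:ℝ)*(1 - f))
      have hX : (0:ℝ) < ((N:ℝ)*f)^2 := pow_pos (lt_trans one_pos hd1) 2
      have e : (2*(N:ℝ)*f)^2 = 4 * ((N:ℝ)*f)^2 := by ring
      rw [e, hge]
      have e2 : (1:ℝ)/(4 * ((N:ℝ)*f)^2) = (1/4) * (1/((N:ℝ)*f)^2) :=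
        (one_div_mul_one_div 4 (((N:ℝ)*f)^2)).symm
      rw [e2]
      linarith [hg2]
    · have hdke : min f (1 - f) = 1 - f := min_eq_right hc
      rw [hdke] at hd1 ⊢
      have hge := DetAux.g_eq hd1.le
      have hg2 := DetAux.g_nonneg ((N:ℝ)*f)
      have hX : (0:ℝ) < ((N:ℝ)*(1-f))^2 := pow_pos (lt_trans one_pos hd1) 2
      have e : (2*(N:ℝ)*(1-f))^2 = 4 * ((N:ℝ)*(1-f))^2 := by ring
      rw [e, hge]
      have e2 : (1:ℝ)/(4 * ((N:ℝ)*(1-f))^2) = (1/4) * (1/((N:ℝ)*(1-f))^2) :=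
        (one_div_mul_one_div 4 (((N:ℝ)*(1-f))^2)).symm
      rw [e2]
      linarith [hg2]
  -- bijection facts
  have hσmem : ∀ k ∈ Finset.range M, σ k ∈ Finset.range M := by
    intro k hk
    simp only [Finset.mem_range] at hk ⊢
    simp only [hσ_def]
    split_ifs <;> omega
  have hτmem : ∀ i ∈ Finset.range M, τ i ∈ Finset.range M := by
    intro i hi
    simp only [Finset.mem_range] at hi ⊢
    simp only [hτ_def]
    split_ifs <;> omega
  have hleft : ∀ k ∈ Finset.range M, τ (σ k) = k := by
    intro k hk
    simp only [Finset.mem_range] at hk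
    simp only [hσ_def, hτ_def]
    split_ifs <;> omega
  have hright : ∀ i ∈ Finset.range M, σ (τ i) = i := by
    intro i hi
    simp only [Finset.mem_range] at hi
    simp only [hσ_def, hτ_def]
    split_ifs <;> omega
  -- sum bounds
  have hsumA : ∑ k ∈ Finset.range M, DetAux.g ((N:ℝ) * Int.fract (θ k - t))
      ≤ ∑ i ∈ Finset.range M, DetAux.g (α + 3 * (i:ℝ)) := by
    have step1 : ∑ k ∈ Finset.range M, DetAux.g ((N:ℝ) * Int.fract (θ k - t))
        ≤ ∑ k ∈ Finset.range M, DetAux.g (α + 3 * ((σ k : ℕ):ℝ)) := by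
      apply Finset.sum_le_sum
      intro k hk
      exact DetAux.g_antitone (hA k (Finset.mem_range.mp hk))
    have step2 : ∑ k ∈ Finset.range M, DetAux.g (α + 3 * ((σ k : ℕ):ℝ))
        = ∑ i ∈ Finset.range M, DetAux.g (α + 3 * (i:ℝ)) :=
      Finset.sum_nbij' σ τ hσmem hτmem hleft hright (fun k _ => rfl)
    linarith [step1, step2.le, step2.ge]
  have hsumB : ∑ k ∈ Finset.range M, DetAux.g ((N:ℝ) * (1 - Int.fract (θ k - t)))
      ≤ ∑ i ∈ Finset.range M, DetAux.g (β + 3 * (i:ℝ)) := by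
    have step1 : ∑ k ∈ Finset.range M, DetAux.g ((N:ℝ) * (1 - Int.fract (θ k - t)))
        ≤ ∑ k ∈ Finset.range M, DetAux.g (β + 3 * ((M - 1 - σ k : ℕ):ℝ)) := by
      apply Finset.sum_le_sum
      intro k hk
      exact DetAux.g_antitone (hB k (Finset.mem_range.mp hk))
    have step2 : ∑ k ∈ Finset.range M, DetAux.g (β + 3 * ((M - 1 - σ k : ℕ):ℝ))
        = ∑ i ∈ Finset.range M, DetAux.g (β + 3 * ((M - 1 - i : ℕ):ℝ)) :=
      Finset.sum_nbij' σ τ hσmem hτmem hleft hright (fun k _ => rfl)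
    have step3 : ∑ i ∈ Finset.range M, DetAux.g (β + 3 * ((M - 1 - i : ℕ):ℝ))
        = ∑ i ∈ Finset.range M, DetAux.g (β + 3 * (i:ℝ)) :=
      Finset.sum_range_reflect (fun i => DetAux.g (β + 3 * (i:ℝ))) M
    linarith [step1, step2.le, step3.le, step2.ge, step3.ge]
  have hsum : ∑ k ∈ Finset.range M, fejerN N (2*Real.pi*(θ k - t)) ≤ 175/432 := by
    have h1 : ∑ k ∈ Finset.range M, fejerN N (2*Real.pi*(θ k - t))
        ≤ ∑ k ∈ Finset.range M, (1/4) * (DetAux.g ((N:ℝ) * Int.fract (θ k - t))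
          + DetAux.g ((N:ℝ) * (1 - Int.fract (θ k - t)))) := Finset.sum_le_sum hterm
    have h2 : ∑ k ∈ Finset.range M, (1/4) * (DetAux.g ((N:ℝ) * Int.fract (θ k - t))
          + DetAux.g ((N:ℝ) * (1 - Int.fract (θ k - t))))
        = (1/4) * ((∑ k ∈ Finset.range M, DetAux.g ((N:ℝ) * Int.fract (θ k - t)))
          + ∑ k ∈ Finset.range M, DetAux.g ((N:ℝ) * (1 - Int.fract (θ k - t)))) := by
      rw [← Finset.mul_sum, Finset.sum_add_distrib]
    have h3 := DetAux.sumbound M α β hα0 hβ0 hαβ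
    linarith [hsumA, hsumB]
  -- final numeric contradiction
  have hfinal : pdist M N θ j < tauC / (M:ℝ) := by
    rw [pdist, tauC, ← ht]
    have hnum : (175:ℝ)/432 < 4/Real.pi^2 := by
      rw [div_lt_div_iff₀ (by norm_num) (by positivity)]
      nlinarith [Real.pi_lt_d6, Real.pi_gt_three, Real.pi_pos]
    calc (1/(M:ℝ)) * ∑ k ∈ Finset.range M, fejerN N (2*Real.pi*(θ k - t))
        ≤ (1/(M:ℝ)) * (175/432) := by
          apply mul_le_mul_of_nonneg_left hsum (by positivity)
      _ < (1/(M:ℝ)) * (4/Real.pi^2) := by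
          apply mul_lt_mul_of_pos_left hnum (by positivity)
      _ = 4/Real.pi^2 / (M:ℝ) := by ring
  linarith [hpj, hfinal]
end

section
/- Let 0 < a < 1/3. Then the function x ↦ H⁺(x, a) is strictly decreasing on the interval (0, (1−a)/2]; that is, if 0 < x₁ < x₂ ≤ (1−a)/2 then H⁺(x₂, a) < H⁺(x₁, a). -/
/-- Kullback–Leibler divergence between Bernoulli(`x + a`) and Bernoulli(`x`). -/
noncomputable def Hplus (x a : ℝ) : ℝ :=
  (x + a) * Real.log ((x + a) / x) + (1 - x - a) * Real.log ((1 - x - a) / (1 - x))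

/-- Kullback–Leibler divergence between Bernoulli(`x − a`) and Bernoulli(`x`). -/
noncomputable def Hminus (x a : ℝ) : ℝ :=
  (x - a) * Real.log ((x - a) / x) + (1 - x + a) * Real.log ((1 - x + a) / (1 - x))

/-- Trapezoid bound: for `0 < s < t`, `log t - log s < (t - s) * (1/s + 1/t) / 2`,
since the trapezoid rule overestimates the integral of the convex function `1/y`. -/
lemma log_lt_trap {s t : ℝ} (hs : 0 < s) (hst : s < t) :
    Real.log t - Real.log s < (t - s) * (1 / s + 1 / t) / 2 := by
  set g : ℝ → ℝ := fun y => (y - s) * (1 / s + 1 / y) / 2 - Real.log y with hg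
  have hder : ∀ y : ℝ, 0 < y →
      HasDerivAt g ((1 * (1 / s + 1 / y) + (y - s) * (-(1 / y ^ 2))) / 2 - 1 / y) y := by
    intro y hy0
    have ha : HasDerivAt (fun y : ℝ => y - s) 1 y := (hasDerivAt_id y).sub_const s
    have hb : HasDerivAt (fun y : ℝ => 1 / s + 1 / y) (-(1 / y ^ 2)) y := by
      simpa [one_div] using (hasDerivAt_inv (ne_of_gt hy0)).const_add (1 / s)
    have hc := (ha.mul hb).div_const 2
    have hd := Real.hasDerivAt_log (ne_of_gt hy0)
    simpa [hg, one_div] using hc.fun_sub hd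
  have hderiv : ∀ y ∈ interior (Set.Ici s), 0 < deriv g y := by
    intro y hy
    rw [interior_Ici] at hy
    have hy0 : 0 < y := hs.trans hy
    rw [(hder y hy0).deriv]
    have heq : (1 * (1 / s + 1 / y) + (y - s) * -(1 / y ^ 2)) / 2 - 1 / y
        = (y - s) ^ 2 / (2 * s * y ^ 2) := by
      field_simp
      ring
    rw [heq]
    have h1 : 0 < (y - s) ^ 2 := pow_pos (sub_pos.mpr hy) 2
    positivity
  have hcont : ContinuousOn g (Set.Ici s) := fun y hy =>
    ((hder y (lt_of_lt_of_le hs hy)).continuousAt).continuousWithinAt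
  have hmono := strictMonoOn_of_deriv_pos (convex_Ici s) hcont hderiv
  have h2 := hmono Set.self_mem_Ici (Set.mem_Ici.mpr hst.le) hst
  simp only [hg, sub_self, zero_mul, zero_div, zero_sub] at h2
  linarith

/-- The derivative of `x ↦ H⁺(x, a)`. -/
lemma hplus_hasDerivAt (a x : ℝ) (ha : 0 < a) (hx : 0 < x) (hxa : x + a < 1) :
    HasDerivAt (fun y => Hplus y a)
      (Real.log (x + a) - Real.log x - Real.log (1 - x - a) + Real.log (1 - x)
        - a / x - a / (1 - x)) x := by
  have hx0 : (0:ℝ) < x + a := by linarith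
  have h1x : (0:ℝ) < 1 - x := by linarith
  have h1xa : (0:ℝ) < 1 - x - a := by linarith
  set F : ℝ → ℝ := fun y =>
    (y + a) * (Real.log (y + a) - Real.log y)
      + (1 - y - a) * (Real.log (1 - y - a) - Real.log (1 - y)) with hF
  have hFd : HasDerivAt F
      (1 * (Real.log (x + a) - Real.log x) + (x + a) * (1 / (x + a) - 1 / x)
        + ((-1) * (Real.log (1 - x - a) - Real.log (1 - x))
          + (1 - x - a) * ((-1) / (1 - x - a) - (-1) / (1 - x)))) x := by
    have ha1 : HasDerivAt (fun y : ℝ => y + a) 1 x := (hasDerivAt_id x).add_const a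
    have hl1 : HasDerivAt (fun y : ℝ => Real.log (y + a)) (1 / (x + a)) x := by
      simpa using ha1.log (ne_of_gt hx0)
    have hl2 : HasDerivAt (fun y : ℝ => Real.log y) (1 / x) x := by
      simpa [one_div] using Real.hasDerivAt_log (ne_of_gt hx)
    have ha2 : HasDerivAt (fun y : ℝ => 1 - y - a) (-1) x := by
      simpa using ((hasDerivAt_id x).const_sub 1).sub_const a
    have ha3 : HasDerivAt (fun y : ℝ => 1 - y) (-1) x := (hasDerivAt_id x).const_sub 1
    have hl3 : HasDerivAt (fun y : ℝ => Real.log (1 - y - a)) ((-1) / (1 - x - a)) x :=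
      ha2.log (ne_of_gt h1xa)
    have hl4 : HasDerivAt (fun y : ℝ => Real.log (1 - y)) ((-1) / (1 - x)) x :=
      ha3.log (ne_of_gt h1x)
    exact (ha1.mul (hl1.sub hl2)).add (ha2.mul (hl3.sub hl4))
  have hEq : (fun y => Hplus y a) =ᶠ[nhds x] F := by
    have hmem : x ∈ Set.Ioo (0:ℝ) (1 - a) := ⟨hx, by linarith⟩
    filter_upwards [isOpen_Ioo.mem_nhds hmem] with y hy
    obtain ⟨hy0, hy1⟩ := hy
    have h1y : (0:ℝ) < 1 - y := by nlinarith [ha]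
    have h1ya : (0:ℝ) < 1 - y - a := by linarith
    have hy0a : (0:ℝ) < y + a := by linarith
    simp only [Hplus, hF, Real.log_div (ne_of_gt hy0a) (ne_of_gt hy0),
      Real.log_div (ne_of_gt h1ya) (ne_of_gt h1y)]
  have := hFd.congr_of_eventuallyEq hEq
  refine this.congr_deriv ?_
  field_simp
  ring

/-- The derivative of `x ↦ H⁺(x, a)` is negative on `(0, (1-a)/2]`. -/
lemma hplus_deriv_neg (a x : ℝ) (ha : 0 < a) (hx : 0 < x) (hx2 : x ≤ (1 - a) / 2) :
    Real.log (x + a) - Real.log x - Real.log (1 - x - a) + Real.log (1 - x)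
      - a / x - a / (1 - x) < 0 := by
  have h1x : (0:ℝ) < 1 - x := by linarith
  have h1xa : (0:ℝ) < 1 - x - a := by linarith
  have hx0 : (0:ℝ) < x + a := by linarith
  have hA : Real.log (x + a) - Real.log x < a * (1 / x + 1 / (x + a)) / 2 := by
    have := log_lt_trap hx (by linarith : x < x + a)
    have he : x + a - x = a := by ring
    rw [he] at this
    linarith
  have hB : Real.log (1 - x) - Real.log (1 - x - a) <
      a * (1 / (1 - x - a) + 1 / (1 - x)) / 2 := by
    have := log_lt_trap h1xa (by linarith : 1 - x - a < 1 - x)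
    have he : 1 - x - (1 - x - a) = a := by ring
    rw [he] at this
    linarith
  have hC : 1 / (x + a) + 1 / (1 - x - a) ≤ 1 / x + 1 / (1 - x) := by
    have e1 : 1 / (x + a) + 1 / (1 - x - a) = 1 / ((x + a) * (1 - x - a)) := by
      field_simp
      ring
    have e2 : 1 / x + 1 / (1 - x) = 1 / (x * (1 - x)) := by
      field_simp
      ring
    rw [e1, e2]
    apply one_div_le_one_div_of_le (by positivity)
    nlinarith
  have hC' : a * (1 / (x + a) + 1 / (1 - x - a)) ≤ a * (1 / x + 1 / (1 - x)) :=
    mul_le_mul_of_nonneg_left hC ha.le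
  have e3 : a / x = a * (1 / x) := by ring
  have e4 : a / (1 - x) = a * (1 / (1 - x)) := by ring
  nlinarith [hA, hB, hC', e3, e4]

/-- `x ↦ H⁺(x, a)` is strictly decreasing on `(0, (1−a)/2]`. -/
theorem Hplus_strictAntiOn (a : ℝ) (ha0 : 0 < a) (ha1 : a < 1 / 3)
    (x₁ x₂ : ℝ) (hx₁ : 0 < x₁) (hx : x₁ < x₂) (hx₂ : x₂ ≤ (1 - a) / 2) :
    Hplus x₂ a < Hplus x₁ a := by
  have ha' : a < 1 := by linarith
  have hanti : StrictAntiOn (fun y => Hplus y a) (Set.Icc x₁ x₂) := by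
    apply strictAntiOn_of_deriv_neg (convex_Icc x₁ x₂)
    · intro y hy
      obtain ⟨hy1, hy2⟩ := hy
      have hy0 : 0 < y := lt_of_lt_of_le hx₁ hy1
      have hya : y + a < 1 := by nlinarith
      exact ((hplus_hasDerivAt a y ha0 hy0 hya).continuousAt).continuousWithinAt
    · intro y hy
      rw [interior_Icc] at hy
      obtain ⟨hy1, hy2⟩ := hy
      have hy0 : 0 < y := hx₁.trans hy1
      have hyle : y ≤ (1 - a) / 2 := le_of_lt (hy2.trans_le hx₂)
      have hya : y + a < 1 := by linarith
      rw [(hplus_hasDerivAt a y ha0 hy0 hya).deriv]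
      exact hplus_deriv_neg a y ha0 hy0 hyle
  exact hanti (Set.left_mem_Icc.mpr hx.le) (Set.right_mem_Icc.mpr hx.le) hx
end

section
/- Let 0 < a < 1/3. Then the function x ↦ H⁻(x, a) is strictly decreasing on the interval (a, 1/2]; that is, if a < x₁ < x₂ ≤ 1/2 then H⁻(x₂, a) < H⁻(x₁, a). -/
private lemma aux_hasDerivAt_phi (s : ℝ) (hs : -1 < s) :
    HasDerivAt (fun s : ℝ => Real.log (1 + s) - 2 * s / (2 + s))
      (1 / (1 + s) - 4 / (2 + s) ^ 2) s := by
  have h1 : (0:ℝ) < 1 + s := by linarith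
  have h2 : (0:ℝ) < 2 + s := by linarith
  have hlog : HasDerivAt (fun s : ℝ => Real.log (1 + s)) (1 / (1 + s)) s := by
    have := ((hasDerivAt_id s).const_add 1).log (by positivity)
    simpa using this
  have hrat : HasDerivAt (fun s : ℝ => 2 * s / (2 + s)) (4 / (2 + s) ^ 2) s := by
    have := ((hasDerivAt_id s).const_mul 2).div ((hasDerivAt_id s).const_add 2) (by positivity)
    refine this.congr_deriv ?_
    simp only [id]
    ring
  exact hlog.sub hrat

private lemma aux_log_lt (t : ℝ) (ht : 0 < t) : 2 * t / (2 + t) < Real.log (1 + t) := by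
  set φ : ℝ → ℝ := fun s => Real.log (1 + s) - 2 * s / (2 + s) with hφ
  have hmono : StrictMonoOn φ (Set.Ici 0) := by
    apply strictMonoOn_of_deriv_pos (convex_Ici 0)
    · intro s hs
      exact (aux_hasDerivAt_phi s (by simp at hs; linarith)).continuousAt.continuousWithinAt
    · intro s hs
      rw [interior_Ici] at hs
      have hs0 : (0:ℝ) < s := hs
      rw [(aux_hasDerivAt_phi s (by linarith)).deriv]
      rw [sub_pos, div_lt_div_iff₀ (by positivity) (by positivity)]
      nlinarith
  have h0 : φ 0 = 0 := by simp [hφ]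
  have := hmono (Set.self_mem_Ici) (Set.mem_Ici.2 ht.le) ht
  rw [h0] at this
  simpa [hφ, sub_pos] using this

/-- `x ↦ H⁻(x, a)` is strictly decreasing on `(a, 1/2]`. -/
theorem Hminus_strictAntiOn (a : ℝ) (ha0 : 0 < a) (ha1 : a < 1 / 3)
    (x₁ x₂ : ℝ) (hx₁ : a < x₁) (hx : x₁ < x₂) (hx₂ : x₂ ≤ 1 / 2) :
    Hminus x₂ a < Hminus x₁ a := by
  set g : ℝ → ℝ := fun x => (x - a) * (Real.log (x - a) - Real.log x)
      + (1 - x + a) * (Real.log (1 - x + a) - Real.log (1 - x)) with hg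
  -- derivative of g
  have hderiv : ∀ x : ℝ, a < x → x < 1 →
      HasDerivAt g ((Real.log (x - a) - Real.log x)
        - (Real.log (1 - x + a) - Real.log (1 - x)) + (a / x + a / (1 - x))) x := by
    intro x hax hx1
    have hxa : (0:ℝ) < x - a := by linarith
    have hx0 : (0:ℝ) < x := by linarith
    have h1x : (0:ℝ) < 1 - x := by linarith
    have h1xa : (0:ℝ) < 1 - x + a := by linarith
    have d1 : HasDerivAt (fun x : ℝ => x - a) 1 x := by
      simpa using (hasDerivAt_id x).sub_const a
    have d2 : HasDerivAt (fun x : ℝ => 1 - x + a) (-1) x := by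
      have := ((hasDerivAt_id x).const_sub 1).add_const a
      simpa using this
    have d3 : HasDerivAt (fun x : ℝ => 1 - x) (-1) x := by
      simpa using (hasDerivAt_id x).const_sub 1
    have l1 : HasDerivAt (fun x : ℝ => Real.log (x - a)) (1 / (x - a)) x := by
      simpa using d1.log hxa.ne'
    have l2 : HasDerivAt (fun x : ℝ => Real.log x) (1 / x) x := by
      simpa using (hasDerivAt_id x).log hx0.ne'
    have l3 : HasDerivAt (fun x : ℝ => Real.log (1 - x + a)) (-1 / (1 - x + a)) x := by
      simpa using d2.log h1xa.ne'
    have l4 : HasDerivAt (fun x : ℝ => Real.log (1 - x)) (-1 / (1 - x)) x := by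
      simpa using d3.log h1x.ne'
    have h := (d1.mul (l1.sub l2)).add (d2.mul (l3.sub l4))
    refine h.congr_deriv ?_
    simp only [Pi.sub_apply]
    field_simp
    ring
  -- derivative negative on (a, 1/2]
  have hneg : ∀ x : ℝ, a < x → x ≤ 1 / 2 →
      (Real.log (x - a) - Real.log x)
        - (Real.log (1 - x + a) - Real.log (1 - x)) + (a / x + a / (1 - x)) < 0 := by
    intro x hax hhalf
    have hxa : (0:ℝ) < x - a := by linarith
    have hx0 : (0:ℝ) < x := by linarith
    have h1x : (0:ℝ) < 1 - x := by linarith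
    have h1xa : (0:ℝ) < 1 - x + a := by linarith
    set u : ℝ := (x - a) * (1 - x) with hu
    have hu0 : 0 < u := mul_pos hxa h1x
    have hcomb : (Real.log (x - a) - Real.log x)
        - (Real.log (1 - x + a) - Real.log (1 - x))
        = Real.log u - Real.log (u + a) := by
      have e1 : Real.log u = Real.log (x - a) + Real.log (1 - x) :=
        Real.log_mul hxa.ne' h1x.ne'
      have e2 : Real.log (u + a) = Real.log x + Real.log (1 - x + a) := by
        have : u + a = x * (1 - x + a) := by rw [hu]; ring
        rw [this, Real.log_mul hx0.ne' h1xa.ne']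
      rw [e1, e2]; ring
    rw [hcomb]
    -- need : a/x + a/(1-x) < log(u+a) - log u
    have key : Real.log (u + a) - Real.log u = Real.log (1 + a / u) := by
      rw [← Real.log_div (by positivity) hu0.ne']
      congr 1
      field_simp
    have haux := aux_log_lt (a / u) (by positivity)
    have heq : 2 * (a / u) / (2 + a / u) = 2 * a / (2 * u + a) := by
      field_simp
    have hsum : a / x + a / (1 - x) = a / (x * (1 - x)) := by
      field_simp
      ring
    have hle : a / (x * (1 - x)) ≤ 2 * a / (2 * u + a) := by
      rw [div_le_div_iff₀ (by positivity) (by positivity), hu]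
      nlinarith [mul_nonneg (mul_nonneg ha0.le ha0.le) (by linarith : (0:ℝ) ≤ 1 - 2 * x)]
    have := haux
    rw [heq, ← key] at this
    rw [hsum]
    linarith
  -- strict anti on Icc x₁ x₂
  have hsub : ∀ x ∈ Set.Icc x₁ x₂, a < x ∧ x < 1 := by
    intro x hx'
    exact ⟨lt_of_lt_of_le hx₁ hx'.1, by nlinarith [hx'.2]⟩
  have hanti : StrictAntiOn g (Set.Icc x₁ x₂) := by
    apply strictAntiOn_of_deriv_neg (convex_Icc x₁ x₂)
    · intro x hx'
      obtain ⟨h1, h2⟩ := hsub x hx'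
      exact (hderiv x h1 h2).continuousAt.continuousWithinAt
    · intro x hx'
      rw [interior_Icc] at hx'
      have h1 : a < x := lt_trans hx₁ hx'.1
      have h2 : x ≤ 1 / 2 := le_of_lt (lt_of_lt_of_le hx'.2 hx₂)
      rw [(hderiv x h1 (by linarith)).deriv]
      exact hneg x h1 h2
  have hval : ∀ x : ℝ, a < x → x < 1 → Hminus x a = g x := by
    intro x hax hx1
    have hxa : (0:ℝ) < x - a := by linarith
    have hx0 : (0:ℝ) < x := by linarith
    have h1x : (0:ℝ) < 1 - x := by linarith
    have h1xa : (0:ℝ) < 1 - x + a := by linarith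
    rw [Hminus, hg]
    rw [Real.log_div hxa.ne' hx0.ne', Real.log_div h1xa.ne' h1x.ne']
  have e1 := hval x₁ hx₁ (by linarith)
  have e2 := hval x₂ (by linarith) (by linarith)
  rw [e1, e2]
  exact hanti (Set.left_mem_Icc.2 hx.le) (Set.right_mem_Icc.2 hx.le) hx
end

section
/- Let 0 < a < 1/3. Then for every x with a < x ≤ 1/2, one has H⁻(x, a) ≥ H⁺(x, a). -/
/-- `H⁻(x, a) ≥ H⁺(x, a)` for `a < x ≤ 1/2`. -/
theorem Hplus_le_Hminus (a : ℝ) (ha0 : 0 < a) (ha1 : a < 1 / 3)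
    (x : ℝ) (hx1 : a < x) (hx2 : x ≤ 1 / 2) :
    Hplus x a ≤ Hminus x a := by
  have hx0 : 0 < x := ha0.trans hx1
  have hax : a < 1 - x := by linarith
  set G : ℝ → ℝ := fun b =>
    (x - b) * (Real.log (x - b) - Real.log x)
    + (1 - x + b) * (Real.log (1 - x + b) - Real.log (1 - x))
    - (x + b) * (Real.log (x + b) - Real.log x)
    - (1 - x - b) * (Real.log (1 - x - b) - Real.log (1 - x)) with hGdef
  set G' : ℝ → ℝ := fun b =>
    (Real.log (1 - x + b) + Real.log (1 - x - b) - 2 * Real.log (1 - x))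
    - (Real.log (x + b) + Real.log (x - b) - 2 * Real.log x) with hG'def
  have key : ∀ b ∈ Set.Icc (0:ℝ) a, HasDerivAt G (G' b) b := by
    intro b hb
    have h1 : 0 < x - b := by have := hb.2; linarith
    have h2 : 0 < x + b := by have := hb.1; linarith
    have h3 : 0 < 1 - x - b := by have := hb.2; linarith
    have h4 : 0 < 1 - x + b := by have := hb.1; linarith
    have d1 : HasDerivAt (fun y : ℝ => x - y) (-1) b := by
      simpa using (hasDerivAt_id b).const_sub x
    have d2 : HasDerivAt (fun y : ℝ => x + y) 1 b := by
      simpa using (hasDerivAt_id b).const_add x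
    have d3 : HasDerivAt (fun y : ℝ => 1 - x - y) (-1) b := by
      simpa using (hasDerivAt_id b).const_sub (1 - x)
    have d4 : HasDerivAt (fun y : ℝ => 1 - x + y) 1 b := by
      simpa using (hasDerivAt_id b).const_add (1 - x)
    have t1 : HasDerivAt (fun y : ℝ => (x - y) * (Real.log (x - y) - Real.log x))
        ((-1) * (Real.log (x - b) - Real.log x) + (x - b) * ((-1) / (x - b))) b :=
      d1.mul ((d1.log h1.ne').sub_const _)
    have t2 : HasDerivAt (fun y : ℝ => (1 - x + y) * (Real.log (1 - x + y) - Real.log (1 - x)))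
        (1 * (Real.log (1 - x + b) - Real.log (1 - x)) + (1 - x + b) * (1 / (1 - x + b))) b :=
      d4.mul ((d4.log h4.ne').sub_const _)
    have t3 : HasDerivAt (fun y : ℝ => (x + y) * (Real.log (x + y) - Real.log x))
        (1 * (Real.log (x + b) - Real.log x) + (x + b) * (1 / (x + b))) b :=
      d2.mul ((d2.log h2.ne').sub_const _)
    have t4 : HasDerivAt (fun y : ℝ => (1 - x - y) * (Real.log (1 - x - y) - Real.log (1 - x)))
        ((-1) * (Real.log (1 - x - b) - Real.log (1 - x)) + (1 - x - b) * ((-1) / (1 - x - b))) b :=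
      d3.mul ((d3.log h3.ne').sub_const _)
    have := ((t1.add t2).sub t3).sub t4
    refine this.congr_deriv ?_
    field_simp [hG'def]
    ring
  have hmono : MonotoneOn G (Set.Icc 0 a) := by
    apply monotoneOn_of_deriv_nonneg (convex_Icc 0 a)
    · exact fun b hb => (key b hb).continuousAt.continuousWithinAt
    · intro b hb
      rw [interior_Icc] at hb
      exact ((key b ⟨hb.1.le, hb.2.le⟩).differentiableAt).differentiableWithinAt
    · intro b hb
      rw [interior_Icc] at hb
      rw [(key b ⟨hb.1.le, hb.2.le⟩).deriv]
      -- show 0 ≤ G' b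
      have h1 : 0 < x - b := by linarith [hb.2]
      have h2 : 0 < x + b := by linarith [hb.1]
      have h3 : 0 < 1 - x - b := by linarith [hb.2]
      have h4 : 0 < 1 - x + b := by linarith [hb.1]
      have hb0 : 0 < b := hb.1
      have hq : 0 < (x + b) * (x - b) := mul_pos h2 h1
      have hp : 0 < (1 - x + b) * (1 - x - b) := mul_pos h4 h3
      have h1x : 0 < 1 - x := by linarith
      have hineq : (x + b) * (x - b) * ((1 - x) * (1 - x))
          ≤ (1 - x + b) * (1 - x - b) * (x * x) := by nlinarith [sq_nonneg b, sq_nonneg (1 - 2*x)]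
      have hlog : Real.log ((x + b) * (x - b) * ((1 - x) * (1 - x)))
          ≤ Real.log ((1 - x + b) * (1 - x - b) * (x * x)) :=
        Real.log_le_log (by positivity) hineq
      rw [Real.log_mul hq.ne' (by positivity), Real.log_mul hp.ne' (by positivity),
        Real.log_mul h2.ne' h1.ne', Real.log_mul h4.ne' h3.ne',
        Real.log_mul h1x.ne' h1x.ne', Real.log_mul hx0.ne' hx0.ne'] at hlog
      simp only [hG'def]
      linarith
  have hG0 : G 0 = 0 := by simp [hGdef]
  have hGa : G a = Hminus x a - Hplus x a := by
    have h1 : 0 < x - a := by linarith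
    have h3 : 0 < 1 - x - a := by linarith
    have h1x : 0 < 1 - x := by linarith
    simp only [hGdef, Hminus, Hplus]
    rw [Real.log_div h1.ne' hx0.ne', Real.log_div (by positivity : (0:ℝ) < x + a).ne' hx0.ne',
      Real.log_div h3.ne' h1x.ne', Real.log_div (by positivity : (0:ℝ) < 1 - x + a).ne' h1x.ne']
    ring
  have := hmono (Set.left_mem_Icc.mpr ha0.le) (Set.right_mem_Icc.mpr ha0.le) ha0.le
  rw [hG0, hGa] at this
  linarith
end
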